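/- arXiv:2509.20814 — 9 statements merged into one kernel-verified Lean document; each statement's English description precedes it below -/
import Mathlib

section
/- Let n ≥ 1, k ≥ 1 and let d_1, …, d_k ∈ ℝ^n. Then min_{‖h‖=1} max_{1≤i≤k} ⟨d_i, h⟩ ≥ 0 if and only if 0 belongs to the convex hull conv{d_1, …, d_k}. -/
/-!
If `0` lies in the convex hull of the `d i`, then no open half-space `{x | ⟪x, h⟫ < 0}`,
being convex and missing `0`, can contain all the `d i`; so every value of the max is
nonnegative. Conversely, if `0` is not in the (compact, convex) hull, Hahn–Banach and the
Riesz representation give a unit vector `h` with `⟪d i, h⟫ < 0` for all `i`, a negative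
value of the max.
-/

open scoped RealInnerProductSpace

theorem le_ciSup_iff_exists_of_finite {ι α : Type*} [ConditionallyCompleteLinearOrder α]
    [Finite ι] [Nonempty ι] {f : ι → α} {a : α} : a ≤ ⨆ i, f i ↔ ∃ i, a ≤ f i := by
  constructor
  · intro ha
    obtain ⟨i, hi⟩ := exists_eq_ciSup_of_finite (f := f)
    exact ⟨i, hi ▸ ha⟩
  · rintro ⟨i, hi⟩
    exact hi.trans (le_ciSup (Set.finite_range f).bddAbove i)

theorem Real.sInf_nonneg_iff {S : Set ℝ} (hS : BddBelow S) : 0 ≤ sInf S ↔ ∀ x ∈ S, 0 ≤ x :=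
  ⟨fun h _ hx => h.trans (csInf_le hS hx), Real.sInf_nonneg⟩

section InnerProductSpace

variable {E : Type*} [NormedAddCommGroup E] [InnerProductSpace ℝ E]

theorem exists_inner_nonneg_of_zero_mem_convexHull {s : Set E}
    (h0 : (0 : E) ∈ convexHull ℝ s) (h : E) : ∃ x ∈ s, 0 ≤ ⟪x, h⟫ := by
  by_contra! hneg
  have hconv : Convex ℝ {x : E | ⟪x, h⟫ < 0} :=
    convex_halfSpace_lt (innerSLFlip ℝ h).toLinearMap.isLinear 0
  have h0h : ⟪(0 : E), h⟫ < 0 := convexHull_min hneg hconv h0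
  simp at h0h

theorem exists_norm_eq_one_inner_neg_of_zero_notMem [CompleteSpace E] {C : Set E}
    (hC : C.Nonempty) (hconv : Convex ℝ C) (hclosed : IsClosed C) (h0 : (0 : E) ∉ C) :
    ∃ h : E, ‖h‖ = 1 ∧ ∀ x ∈ C, ⟪x, h⟫ < 0 := by
  obtain ⟨f, u, hfC, hu⟩ := geometric_hahn_banach_closed_point hconv hclosed h0
  set v := (InnerProductSpace.toDual ℝ E).symm f
  have hvC : ∀ x ∈ C, ⟪x, v⟫ < 0 := fun x hx => by
    rw [real_inner_comm, InnerProductSpace.toDual_symm_apply]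
    exact (hfC x hx).trans (by simpa using hu)
  obtain ⟨x, hx⟩ := hC
  have hv : v ≠ 0 := by
    rintro hv
    simpa [hv] using hvC x hx
  refine ⟨‖v‖⁻¹ • v, norm_smul_inv_norm hv, fun y hy => ?_⟩
  rw [real_inner_smul_right]
  exact mul_neg_of_pos_of_neg (inv_pos.2 (norm_pos_iff.2 hv)) (hvC y hy)

theorem zero_mem_convexHull_iff_forall_exists_inner_nonneg [CompleteSpace E] {s : Set E}
    (hs : s.Finite) (hne : s.Nonempty) :
    (0 : E) ∈ convexHull ℝ s ↔ ∀ h : E, ‖h‖ = 1 → ∃ x ∈ s, 0 ≤ ⟪x, h⟫ := by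
  refine ⟨fun h0 h _ => exists_inner_nonneg_of_zero_mem_convexHull h0 h, fun hs' => ?_⟩
  by_contra h0
  obtain ⟨h, hh, hneg⟩ := exists_norm_eq_one_inner_neg_of_zero_notMem
    (hne.mono (subset_convexHull ℝ s)) (convex_convexHull ℝ s)
    (hs.isCompact_convexHull (𝕜 := ℝ)).isClosed h0
  obtain ⟨x, hx, hxh⟩ := hs' h hh
  exact (hneg x (subset_convexHull ℝ s hx)).not_ge hxh

theorem zero_le_sInf_iSup_inner_iff {ι : Type*} [Finite ι] [Nonempty ι] (d : ι → E) :
    0 ≤ sInf {r : ℝ | ∃ h : E, ‖h‖ = 1 ∧ r = ⨆ i, ⟪d i, h⟫} ↔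
      ∀ h : E, ‖h‖ = 1 → ∃ i, 0 ≤ ⟪d i, h⟫ := by
  obtain ⟨i₀⟩ := ‹Nonempty ι›
  have hbdd : BddBelow {r : ℝ | ∃ h : E, ‖h‖ = 1 ∧ r = ⨆ i, ⟪d i, h⟫} := by
    refine ⟨-‖d i₀‖, ?_⟩
    rintro r ⟨h, hh, rfl⟩
    calc -‖d i₀‖ ≤ ⟪d i₀, h⟫ := by
          simpa [hh] using neg_le_of_abs_le (abs_real_inner_le_norm (d i₀) h)
      _ ≤ ⨆ i, ⟪d i, h⟫ := le_ciSup (f := fun i => ⟪d i, h⟫) (Set.finite_range _).bddAbove i₀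
  simp only [Real.sInf_nonneg_iff hbdd, Set.mem_ofPred_eq, forall_exists_index, and_imp,
    ← le_ciSup_iff_exists_of_finite]
  exact ⟨fun H h hh => H _ h hh rfl, fun H _ h hh hr => hr ▸ H h hh⟩

end InnerProductSpace

theorem stmt1_general (n k : ℕ) (hk : 1 ≤ k)
    (d : Fin k → EuclideanSpace ℝ (Fin n)) :
    0 ≤ sInf {r : ℝ | ∃ h : EuclideanSpace ℝ (Fin n), ‖h‖ = 1 ∧ r = ⨆ i, ⟪d i, h⟫} ↔
      (0 : EuclideanSpace ℝ (Fin n)) ∈ convexHull ℝ (Set.range d) := by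
  have : Nonempty (Fin k) := ⟨⟨0, hk⟩⟩
  rw [zero_le_sInf_iSup_inner_iff,
    zero_mem_convexHull_iff_forall_exists_inner_nonneg (Set.finite_range d) (Set.range_nonempty d)]
  simp only [Set.exists_range_iff]

/-- `min_{‖h‖=1} max_i ⟨d_i, h⟩ ≥ 0` iff `0 ∈ conv{d₁, …, d_k}`. -/
theorem stmt1 (n k : ℕ) (hn : 1 ≤ n) (hk : 1 ≤ k)
    (d : Fin k → EuclideanSpace ℝ (Fin n)) :
    0 ≤ sInf {r : ℝ | ∃ h : EuclideanSpace ℝ (Fin n), ‖h‖ = 1 ∧ r = ⨆ i, ⟪d i, h⟫} ↔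
      (0 : EuclideanSpace ℝ (Fin n)) ∈ convexHull ℝ (Set.range d) :=
  stmt1_general n k hk d
end

section
/- Let n ≥ 1, k ≥ 1 and let d_1, …, d_k ∈ ℝ^n. Then min_{‖h‖=1} max_{1≤i≤k} ⟨d_i, h⟩ = 0 if and only if 0 belongs to the boundary of the convex hull conv{d_1, …, d_k}. -/
open scoped RealInnerProductSpace

/-!
`h ↦ max_i ⟪d i, h⟫` is the support function of `C = conv{d_i}`, and it is positively homogeneous,
so the sign of its minimum `μ` over the unit sphere is decided by nonzero directions. If `0 ∉ C`,
strict separation of `0` from the closed set `C` gives a direction with negative maximum; if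
`0 ∈ C`, every maximum is `≥ 0`. If `0 ∈ interior C`, a ball `B(0, ε) ⊆ C` gives maxima `≥ ε / 2`;
if `0 ∈ C \ interior C`, a supporting hyperplane at `0` (a normal to the affine span of `C` when
`C` has empty interior) gives a direction with maximum `≤ 0`. Hence `0 ≤ μ ↔ 0 ∈ C` and
`0 < μ ↔ 0 ∈ interior C`, and `μ = 0` iff `0 ∈ C \ interior C = frontier C`.
-/

open Set

variable {E : Type*} [NormedAddCommGroup E] [InnerProductSpace ℝ E]

section Separation

variable {C : Set E}

theorem exists_forall_inner_neg_of_zero_notMem [CompleteSpace E] (hC : Convex ℝ C)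
    (hC_closed : IsClosed C) (h0 : (0 : E) ∉ C) : ∃ y : E, ∀ x ∈ C, ⟪x, y⟫ < 0 := by
  obtain ⟨f, u, hfC, hu⟩ := geometric_hahn_banach_closed_point hC hC_closed h0
  refine ⟨(InnerProductSpace.toDual ℝ E).symm f, fun x hx => ?_⟩
  rw [real_inner_comm, InnerProductSpace.toDual_symm_apply]
  exact (hfC x hx).trans (by simpa using hu)

theorem exists_ne_zero_forall_inner_nonpos_of_interior_nonempty [CompleteSpace E]
    (hC : Convex ℝ C) (h0 : (0 : E) ∉ interior C) (hint : (interior C).Nonempty) :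
    ∃ y : E, y ≠ 0 ∧ ∀ x ∈ C, ⟪x, y⟫ ≤ 0 := by
  obtain ⟨f, hf0, hfC⟩ := geometric_hahn_banach_of_nonempty_interior_point hC h0 hint
  refine ⟨(InnerProductSpace.toDual ℝ E).symm f, by simpa using hf0, fun x hx => ?_⟩
  rw [real_inner_comm, InnerProductSpace.toDual_symm_apply]
  simpa using hfC x hx

theorem exists_ne_zero_forall_inner_eq_zero_of_interior_eq_empty [FiniteDimensional ℝ E]
    (hC : Convex ℝ C) (h0 : (0 : E) ∈ C) (hint : interior C = ∅) :
    ∃ y : E, y ≠ 0 ∧ ∀ x ∈ C, ⟪x, y⟫ = 0 := by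
  set V := (affineSpan ℝ C).direction
  have hV : V ≠ ⊤ := by
    rw [Ne, AffineSubspace.direction_eq_top_iff_of_nonempty ⟨0, subset_affineSpan ℝ C h0⟩,
      ← hC.interior_nonempty_iff_affineSpan_eq_top, hint]
    exact not_nonempty_empty
  obtain ⟨y, hyV, hy0⟩ :=
    Submodule.exists_mem_ne_zero_of_ne_bot (mt Submodule.orthogonal_eq_bot_iff.1 hV)
  refine ⟨y, hy0, fun x hx => (Submodule.mem_orthogonal V y).1 hyV x ?_⟩
  simpa using
    AffineSubspace.vsub_mem_direction (subset_affineSpan ℝ C hx) (subset_affineSpan ℝ C h0)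

theorem exists_ne_zero_forall_inner_nonpos_of_mem_of_notMem_interior [FiniteDimensional ℝ E]
    (hC : Convex ℝ C) (h0 : (0 : E) ∈ C) (h0_int : (0 : E) ∉ interior C) :
    ∃ y : E, y ≠ 0 ∧ ∀ x ∈ C, ⟪x, y⟫ ≤ 0 := by
  rcases (interior C).eq_empty_or_nonempty with hint | hint
  · obtain ⟨y, hy0, hy⟩ := exists_ne_zero_forall_inner_eq_zero_of_interior_eq_empty hC h0 hint
    exact ⟨y, hy0, fun x hx => (hy x hx).le⟩
  · exact exists_ne_zero_forall_inner_nonpos_of_interior_nonempty hC h0_int hint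

end Separation

section MaxInner

variable {ι : Type*}

noncomputable def maxInner (d : ι → E) (h : E) : ℝ := ⨆ i, ⟪d i, h⟫

noncomputable def minMaxInner (d : ι → E) : ℝ :=
  sInf {r | ∃ h : E, ‖h‖ = 1 ∧ r = maxInner d h}

variable {d : ι → E}

theorem maxInner_smul {c : ℝ} (hc : 0 ≤ c) (h : E) : maxInner d (c • h) = c * maxInner d h := by
  simp only [maxInner, real_inner_smul_right]
  exact (Real.mul_iSup_of_nonneg hc _).symm

theorem maxInner_nonpos [Nonempty ι] {h : E} (hd : ∀ i, ⟪d i, h⟫ ≤ 0) : maxInner d h ≤ 0 :=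
  ciSup_le hd

theorem le_minMaxInner [Nontrivial E] {c : ℝ} (hc : ∀ h : E, ‖h‖ = 1 → c ≤ maxInner d h) :
    c ≤ minMaxInner d := by
  obtain ⟨h₀, hh₀⟩ := exists_norm_eq E zero_le_one
  refine le_csInf ⟨_, h₀, hh₀, rfl⟩ ?_
  rintro _ ⟨h, hh, rfl⟩
  exact hc h hh

variable [Finite ι]

theorem inner_le_maxInner (i : ι) (h : E) : ⟪d i, h⟫ ≤ maxInner d h :=
  le_ciSup (f := fun j => ⟪d j, h⟫) (Finite.bddAbove_range _) i

theorem inner_le_maxInner_of_mem_convexHull {x : E} (hx : x ∈ convexHull ℝ (range d)) (h : E) :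
    ⟪x, h⟫ ≤ maxInner d h := by
  have hlin : IsLinearMap ℝ fun y : E => ⟪y, h⟫ :=
    ⟨fun a b => inner_add_left a b h, fun c a => real_inner_smul_left a h c⟩
  refine convexHull_min ?_ (convex_halfSpace_le hlin _) hx
  rintro _ ⟨i, rfl⟩
  exact inner_le_maxInner i h

variable [Nonempty ι]

theorem maxInner_neg {h : E} (hd : ∀ i, ⟪d i, h⟫ < 0) : maxInner d h < 0 := by
  obtain ⟨i, hi⟩ := exists_eq_ciSup_of_finite (f := fun i => ⟪d i, h⟫)
  rw [maxInner, ← hi]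
  exact hd i

theorem bddBelow_maxInner_sphere : BddBelow {r | ∃ h : E, ‖h‖ = 1 ∧ r = maxInner d h} := by
  obtain ⟨i⟩ := ‹Nonempty ι›
  refine ⟨-‖d i‖, ?_⟩
  rintro _ ⟨h, hh, rfl⟩
  calc -‖d i‖ = -(‖d i‖ * ‖h‖) := by rw [hh, mul_one]
    _ ≤ ⟪d i, h⟫ := neg_le_of_abs_le (abs_real_inner_le_norm _ _)
    _ ≤ maxInner d h := inner_le_maxInner i h

theorem minMaxInner_le_of_ne_zero {y : E} (hy : y ≠ 0) :
    minMaxInner d ≤ ‖y‖⁻¹ * maxInner d y := by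
  rw [← maxInner_smul (inv_nonneg.2 (norm_nonneg y))]
  exact csInf_le bddBelow_maxInner_sphere ⟨_, norm_smul_inv_norm hy, rfl⟩

theorem minMaxInner_nonneg_iff [CompleteSpace E] [Nontrivial E] :
    0 ≤ minMaxInner d ↔ (0 : E) ∈ convexHull ℝ (range d) := by
  constructor
  · contrapose
    intro h0
    rw [not_le]
    obtain ⟨y, hy⟩ := exists_forall_inner_neg_of_zero_notMem (convex_convexHull ℝ _)
      ((finite_range d).isClosed_convexHull ℝ) h0
    have hneg : maxInner d y < 0 :=
      maxInner_neg fun i => hy _ (subset_convexHull ℝ _ (mem_range_self i))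
    have hy0 : y ≠ 0 := by
      rintro rfl
      simp [maxInner] at hneg
    exact (minMaxInner_le_of_ne_zero hy0).trans_lt
      (mul_neg_of_pos_of_neg (inv_pos.2 (norm_pos_iff.2 hy0)) hneg)
  · intro h0
    exact le_minMaxInner fun h _ => by simpa using inner_le_maxInner_of_mem_convexHull h0 h

theorem minMaxInner_pos_iff [FiniteDimensional ℝ E] [Nontrivial E] :
    0 < minMaxInner d ↔ (0 : E) ∈ interior (convexHull ℝ (range d)) := by
  constructor
  · contrapose
    intro h0
    rw [not_lt]
    by_cases h0C : (0 : E) ∈ convexHull ℝ (range d)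
    · obtain ⟨y, hy0, hy⟩ := exists_ne_zero_forall_inner_nonpos_of_mem_of_notMem_interior
        (convex_convexHull ℝ _) h0C h0
      exact (minMaxInner_le_of_ne_zero hy0).trans <| mul_nonpos_of_nonneg_of_nonpos
        (inv_nonneg.2 (norm_nonneg y))
        (maxInner_nonpos fun i => hy _ (subset_convexHull ℝ _ (mem_range_self i)))
    · exact (not_le.1 (mt minMaxInner_nonneg_iff.1 h0C)).le
  · intro h0
    obtain ⟨ε, hε, hball⟩ := Metric.mem_nhds_iff.1 (mem_interior_iff_mem_nhds.1 h0)
    refine (half_pos hε).trans_le (le_minMaxInner fun h hh => ?_)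
    have hmem : (ε / 2) • h ∈ convexHull ℝ (range d) := hball <| by
      rw [mem_ball_zero_iff, norm_smul, hh, mul_one, Real.norm_of_nonneg (half_pos hε).le]
      exact half_lt_self hε
    simpa [real_inner_smul_left, real_inner_self_eq_norm_sq, hh] using
      inner_le_maxInner_of_mem_convexHull hmem h

end MaxInner

/-- `min_{‖h‖=1} max_i ⟨d_i, h⟩ = 0` iff `0 ∈ bdry(conv{d₁, …, d_k})`. -/
theorem stmt3 (n k : ℕ) (hn : 1 ≤ n) (hk : 1 ≤ k)
    (d : Fin k → EuclideanSpace ℝ (Fin n)) :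
    sInf {r : ℝ | ∃ h : EuclideanSpace ℝ (Fin n), ‖h‖ = 1 ∧ r = ⨆ i, ⟪d i, h⟫} = 0 ↔
      (0 : EuclideanSpace ℝ (Fin n)) ∈ frontier (convexHull ℝ (Set.range d)) := by
  have : Nonempty (Fin k) := ⟨⟨0, hk⟩⟩
  have : Nonempty (Fin n) := ⟨⟨0, hn⟩⟩
  change minMaxInner d = 0 ↔ _
  rw [((finite_range d).isClosed_convexHull ℝ).frontier_eq, mem_sdiff, ← minMaxInner_nonneg_iff,
    ← minMaxInner_pos_iff, not_lt, le_antisymm_iff, and_comm]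
end

section
/- Let n ≥ 1 and let f : ℝ^n → ℝ ∪ {+∞} be a proper lower semicontinuous convex function whose lower level set S_f := {x ∈ ℝ^n : f(x) ≤ 0} is nonempty. Then, as an equality in [0, +∞], Er(f) := inf{ f(x)/dist(x, S_f) : x ∈ ℝ^n, f(x) > 0 } = inf{ − inf_{‖h‖=1} d⁺f(x, h) : x ∈ dom f, f(x) > 0 }, where both infima over an empty index set are +∞ and the quotient f(x)/dist(x, S_f) is +∞ when f(x) = +∞. -/
/-!
The inequality `Er(f) ≤ inf …` needs no convexity: from `x` to a nearest point of `S_f` the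
function drops by at least `f x` over the distance `dist(x, S_f)`. Conversely, let `c` be below
the right-hand side, so that every point with `0 < f < ∞` has a unit direction along which `f`
decreases faster than rate `c`. Stopping on that segment where `f` reaches `0` (convexity), the
same holds for `max f 0`. By Ekeland's variational principle, starting from `x` there is a point
admitting no such descent for `max f 0`; it must lie in `S_f`, and it is reached from `x` at cost
`c · dist`, whence `c · dist(x, S_f) ≤ f x`.
-/

open Metric Filter Topology Set

lemma LowerSemicontinuous.toReal_of_ne_bot_of_ne_top {α : Type*} [TopologicalSpace α]
    {g : α → EReal} (hg : LowerSemicontinuous g) (hbot : ∀ a, g a ≠ ⊥) (htop : ∀ a, g a ≠ ⊤) :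
    LowerSemicontinuous fun a => (g a).toReal := by
  intro a r (hr : r < (g a).toReal)
  rw [← EReal.coe_lt_coe_iff, EReal.coe_toReal (htop a) (hbot a)] at hr
  filter_upwards [hg a r hr] with b hb
  rwa [gt_iff_lt, ← EReal.coe_lt_coe_iff, EReal.coe_toReal (htop b) (hbot b)]

section Ekeland

variable {X : Type*} [MetricSpace X] {φ : X → ℝ} {ε : ℝ}

def ekelandSet (φ : X → ℝ) (ε : ℝ) (u : X) : Set X := {y | φ y + ε * dist y u ≤ φ u}

lemma mem_ekelandSet {u y : X} : y ∈ ekelandSet φ ε u ↔ φ y + ε * dist y u ≤ φ u := Iff.rfl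

lemma mem_ekelandSet_self (u : X) : u ∈ ekelandSet φ ε u := by simp [mem_ekelandSet]

lemma ekelandSet_subset (hε : 0 ≤ ε) {u y : X} (hy : y ∈ ekelandSet φ ε u) :
    ekelandSet φ ε y ⊆ ekelandSet φ ε u := fun w hw => by
  have := mul_le_mul_of_nonneg_left (dist_triangle w y u) hε
  rw [mem_ekelandSet] at hy hw ⊢
  linarith

lemma isClosed_ekelandSet (hφ : LowerSemicontinuous φ) (u : X) :
    IsClosed (ekelandSet φ ε u) :=
  (hφ.add (continuous_const.mul (continuous_id.dist continuous_const)).lowerSemicontinuous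
    ).isClosed_preimage (φ u)

lemma exists_mem_ekelandSet_forall_le (hbdd : BddBelow (range φ)) (u : X) :
    ∃ y ∈ ekelandSet φ ε u, ∀ w ∈ ekelandSet φ ε u, 2 * φ y - φ u ≤ φ w := by
  set m := sInf (φ '' ekelandSet φ ε u)
  have hm : ∀ w ∈ ekelandSet φ ε u, m ≤ φ w := fun w hw =>
    csInf_le (hbdd.mono (image_subset_range _ _)) (mem_image_of_mem φ hw)
  rcases (hm u (mem_ekelandSet_self u)).lt_or_eq with hlt | heq
  · obtain ⟨_, ⟨y, hy, rfl⟩, hym⟩ := exists_lt_of_csInf_lt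
      ⟨φ u, mem_image_of_mem φ (mem_ekelandSet_self u)⟩ (show m < (m + φ u) / 2 by linarith)
    exact ⟨y, hy, fun w hw => by linarith [hm w hw]⟩
  · exact ⟨u, mem_ekelandSet_self u, fun w hw => by linarith [hm w hw]⟩

lemma ekelandSet_subset_closedBall (hε : 0 < ε) {u y : X} (hy : y ∈ ekelandSet φ ε u)
    (hmin : ∀ w ∈ ekelandSet φ ε u, 2 * φ y - φ u ≤ φ w) :
    ekelandSet φ ε y ⊆ closedBall y ((φ u - φ y) / ε) := fun w hw => by
  have := hmin w (ekelandSet_subset hε.le hy hw)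
  rw [mem_closedBall, le_div_iff₀ hε]
  rw [mem_ekelandSet] at hw
  linarith

/-- Each step goes halfway down to the infimum of `φ` on the current set. -/
lemma exists_antitone_ekelandSet_subset_closedBall (hbdd : BddBelow (range φ)) (hε : 0 < ε)
    (x : X) : ∃ (xs : ℕ → X) (r : ℕ → ℝ), xs 0 ∈ ekelandSet φ ε x ∧
      Antitone (ekelandSet φ ε ∘ xs) ∧ (∀ k, ekelandSet φ ε (xs k) ⊆ closedBall (xs k) (r k)) ∧
      Tendsto r atTop (𝓝 0) := by
  choose next hnext_mem hnext_min using exists_mem_ekelandSet_forall_le (ε := ε) hbdd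
  set ys : ℕ → X := fun k => next^[k] x
  have hys_succ (k : ℕ) : ys (k + 1) = next (ys k) := Function.iterate_succ_apply' next k x
  have hmem (k : ℕ) : ys (k + 1) ∈ ekelandSet φ ε (ys k) := hys_succ k ▸ hnext_mem _
  have hφ_anti : Antitone (φ ∘ ys) := antitone_nat_of_succ_le fun k => by
    have := mem_ekelandSet.1 (hmem k)
    have := mul_nonneg hε.le (dist_nonneg (x := ys (k + 1)) (y := ys k))
    simp only [Function.comp_apply]
    linarith
  obtain ⟨L, hL⟩ : ∃ L, Tendsto (φ ∘ ys) atTop (𝓝 L) :=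
    ⟨_, tendsto_atTop_ciInf hφ_anti (hbdd.mono (range_comp_subset_range _ _))⟩
  refine ⟨fun k => ys (k + 1), fun k => (φ (ys k) - φ (ys (k + 1))) / ε, hmem 0,
    antitone_nat_of_succ_le fun k => ekelandSet_subset hε.le (hmem (k + 1)),
    fun k => ?_, ?_⟩
  · change ekelandSet φ ε (ys (k + 1)) ⊆
      closedBall (ys (k + 1)) ((φ (ys k) - φ (ys (k + 1))) / ε)
    rw [hys_succ]
    exact ekelandSet_subset_closedBall hε (hnext_mem _) (hnext_min _)
  simpa using (hL.sub (hL.comp (tendsto_add_atTop_nat 1))).div_const ε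

/-- Ekeland's variational principle. -/
theorem exists_forall_add_mul_dist_le_imp_eq [CompleteSpace X] (hφ : LowerSemicontinuous φ)
    (hbdd : BddBelow (range φ)) (hε : 0 < ε) (x : X) :
    ∃ z, φ z + ε * dist z x ≤ φ x ∧ ∀ y, φ y + ε * dist y z ≤ φ z → y = z := by
  obtain ⟨xs, r, hxs0, hanti, hball, hr⟩ :=
    exists_antitone_ekelandSet_subset_closedBall hbdd hε x
  have hdiam : Tendsto (fun k => diam (ekelandSet φ ε (xs k))) atTop (𝓝 0) := by
    refine squeeze_zero (fun _ => diam_nonneg) (fun k => (diam_mono (hball k)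
      isBounded_closedBall).trans (diam_closedBall ?_)) (by simpa using hr.const_mul 2)
    simpa using hball k (mem_ekelandSet_self _)
  obtain ⟨z, hz⟩ := nonempty_iInter_of_nonempty_biInter (fun k => isClosed_ekelandSet hφ (xs k))
    (fun k => isBounded_closedBall.subset (hball k))
    (fun N => ⟨xs N, mem_iInter₂.2 fun k hk => hanti hk (mem_ekelandSet_self _)⟩) hdiam
  rw [mem_iInter] at hz
  refine ⟨z, ekelandSet_subset hε.le hxs0 (hz 0), fun y hy => ?_⟩
  refine dist_le_zero.1 (ge_of_tendsto hdiam (Eventually.of_forall fun k => ?_))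
  exact dist_le_diam_of_mem (isBounded_closedBall.subset (hball k))
    (ekelandSet_subset hε.le (hz k) hy) (hz k)

lemma exists_nonpos_add_mul_dist_le [CompleteSpace X] (hφ : LowerSemicontinuous φ)
    (hbdd : BddBelow (range φ)) (hε : 0 < ε)
    (hdesc : ∀ u, 0 < φ u → ∃ y, φ y + ε * dist y u < φ u) (x : X) :
    ∃ z, φ z ≤ 0 ∧ φ z + ε * dist z x ≤ φ x := by
  obtain ⟨z, hzx, hzmin⟩ := exists_forall_add_mul_dist_le_imp_eq hφ hbdd hε x
  refine ⟨z, not_lt.1 fun hz => ?_, hzx⟩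
  obtain ⟨y, hy⟩ := hdesc z hz
  rw [hzmin y hy.le, dist_self, mul_zero, add_zero] at hy
  exact lt_irrefl _ hy

/-- On the closed sublevel set `{y | g y ≤ g x}` the function `g` is finite, so the real
version applies there to `max g 0`. -/
lemma exists_nonpos_mul_dist_le_toReal [CompleteSpace X] {g : X → EReal}
    (hg : LowerSemicontinuous g) (hbot : ∀ y, g y ≠ ⊥) (hε : 0 < ε)
    (hdesc : ∀ u (a : ℝ), g u = a → 0 < a → ∃ y, ∃ b : ℝ, g y = b ∧ max b 0 + ε * dist y u < a)
    {x : X} (hx : 0 ≤ g x) (hxtop : g x ≠ ⊤) : ∃ z, g z ≤ 0 ∧ ε * dist z x ≤ (g x).toReal := by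
  set Y := {y | g y ≤ g x}
  have : CompleteSpace Y := (hg.isClosed_preimage (g x)).completeSpace_coe
  have hreal (y : Y) : ∃ a : ℝ, g y = a :=
    ⟨_, (EReal.coe_toReal (ne_top_of_le_ne_top hxtop y.2) (hbot y)).symm⟩
  set ψ : Y → ℝ := fun y => (g y ⊔ 0).toReal
  have hψ_eq {y : Y} {b : ℝ} (hy : g y = b) : ψ y = max b 0 := by
    simp only [ψ, hy, ← EReal.coe_zero, ← EReal.coe_strictMono.monotone.map_max,
      EReal.toReal_coe]
  have hψ_nonneg (y : Y) : 0 ≤ ψ y := EReal.toReal_nonneg le_sup_right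
  have hψ : LowerSemicontinuous ψ :=
    ((hg.comp continuous_subtype_val).sup lowerSemicontinuous_const).toReal_of_ne_bot_of_ne_top
      (fun y => ne_bot_of_le_ne_bot EReal.zero_ne_bot le_sup_right)
      (fun y => (max_lt (ne_top_of_le_ne_top hxtop y.2).lt_top EReal.zero_lt_top).ne)
  have hψ_desc (u : Y) (hu : 0 < ψ u) : ∃ w : Y, ψ w + ε * dist w u < ψ u := by
    obtain ⟨a, hgu⟩ := hreal u
    rw [hψ_eq hgu] at hu ⊢
    have ha : 0 < a := by simpa using hu
    obtain ⟨w, b, hw, hwlt⟩ := hdesc u a hgu ha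
    have hwY : g w ≤ g x := by
      refine le_trans ?_ u.2
      rw [hw, hgu, EReal.coe_le_coe_iff]
      linarith [le_max_left b 0, mul_nonneg hε.le (dist_nonneg (x := w) (y := u))]
    exact ⟨⟨w, hwY⟩, by rwa [hψ_eq hw, max_eq_left ha.le]⟩
  set x₀ : Y := ⟨x, show g x ≤ g x from le_rfl⟩
  obtain ⟨z, hz, hzx⟩ := exists_nonpos_add_mul_dist_le hψ
    ⟨0, by rintro _ ⟨y, rfl⟩; exact hψ_nonneg y⟩ hε hψ_desc x₀
  obtain ⟨a, hgx⟩ : ∃ a : ℝ, g x = a := hreal x₀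
  obtain ⟨b, hgz⟩ := hreal z
  have ha : 0 ≤ a := EReal.coe_nonneg.1 (hgx ▸ hx)
  rw [hψ_eq hgz, hψ_eq (y := x₀) hgx, max_eq_left ha, Subtype.dist_eq] at hzx
  rw [hψ_eq hgz] at hz
  refine ⟨z, by rw [hgz]; exact_mod_cast (le_max_left b 0).trans hz, ?_⟩
  rw [hgx, EReal.toReal_coe]
  linarith [le_max_right b 0]

end Ekeland

lemma infDist_pos_of_pos {X : Type*} [PseudoMetricSpace X] {f : X → EReal}
    (hclosed : IsClosed {y | f y ≤ 0}) (hne : {y | f y ≤ 0}.Nonempty) {x : X} (hx : 0 < f x) :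
    0 < infDist x {y | f y ≤ 0} :=
  (hclosed.notMem_iff_infDist_pos hne).1 hx.not_ge

section DescentRate

variable {E : Type*} [NormedAddCommGroup E] [NormedSpace ℝ E] {f : E → EReal}

/-- `d⁺f(x, h)`; for convex `f` the infimum over `t > 0` is the limit as `t → 0⁺`. -/
noncomputable def rightDirDeriv (f : E → EReal) (x h : E) : EReal :=
  sInf {v | ∃ t : ℝ, 0 < t ∧ v = (f (x + t • h) - f x) / (t : EReal)}

noncomputable def steepestDescent (f : E → EReal) (x : E) : EReal :=
  -sInf {w | ∃ h : E, ‖h‖ = 1 ∧ w = rightDirDeriv f x h}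

def ERealConvex (f : E → EReal) : Prop :=
  ∀ x y : E, ∀ t : ℝ, 0 < t → t < 1 →
    f (t • x + (1 - t) • y) ≤ (t : EReal) * f x + ((1 - t : ℝ) : EReal) * f y

lemma rightDirDeriv_le {x h : E} {t : ℝ} (ht : 0 < t) :
    rightDirDeriv f x h ≤ (f (x + t • h) - f x) / t :=
  sInf_le ⟨t, ht, rfl⟩

lemma neg_rightDirDeriv_le_steepestDescent {x h : E} (hh : ‖h‖ = 1) :
    -rightDirDeriv f x h ≤ steepestDescent f x :=
  EReal.neg_le_neg_iff.2 (sInf_le ⟨h, hh, rfl⟩)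

lemma div_infDist_le_steepestDescent [ProperSpace E] (hclosed : IsClosed {y | f y ≤ 0})
    (hne : {y | f y ≤ 0}.Nonempty) {x : E} (hx : 0 < f x) :
    f x / (infDist x {y | f y ≤ 0} : EReal) ≤ steepestDescent f x := by
  have hd := infDist_pos_of_pos hclosed hne hx
  obtain ⟨p, hp, hdp⟩ := hclosed.exists_infDist_eq_dist hne x
  set d := infDist x {y | f y ≤ 0}
  set h := d⁻¹ • (p - x)
  have hh : ‖h‖ = 1 := by
    rw [norm_smul, ← dist_eq_norm', ← hdp, norm_inv, Real.norm_of_nonneg hd.le,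
      inv_mul_cancel₀ hd.ne']
  have hxh : x + d • h = p := by
    rw [smul_inv_smul₀ hd.ne', add_sub_cancel]
  calc f x / (d : EReal) = -((0 - f x) / d) := by
        rw [zero_sub, div_eq_mul_inv, div_eq_mul_inv, EReal.neg_mul, neg_neg]
    _ ≤ -((f p - f x) / d) := EReal.neg_le_neg_iff.2 <|
        EReal.div_le_div_right_of_nonneg (EReal.coe_nonneg.2 hd.le) (EReal.sub_le_sub hp le_rfl)
    _ ≤ -rightDirDeriv f x h := EReal.neg_le_neg_iff.2 (hxh ▸ rightDirDeriv_le hd)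
    _ ≤ steepestDescent f x := neg_rightDirDeriv_le_steepestDescent hh

lemma exists_add_mul_dist_lt_of_lt_steepestDescent (hnotbot : ∀ x, f x ≠ ⊥) {u : E} {a c : ℝ}
    (hu : f u = a) (hc : (c : EReal) < steepestDescent f u) :
    ∃ y, ∃ b : ℝ, f y = b ∧ b + c * dist y u < a := by
  unfold steepestDescent rightDirDeriv at hc
  obtain ⟨_, ⟨h, hh, rfl⟩, hlt⟩ := sInf_lt_iff.1 (EReal.lt_neg_of_lt_neg hc)
  obtain ⟨_, ⟨t, ht, rfl⟩, hlt⟩ := sInf_lt_iff.1 hlt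
  rw [EReal.div_lt_iff (EReal.coe_pos.2 ht) (EReal.coe_ne_top t), hu,
    EReal.sub_lt_iff (.inl (EReal.coe_ne_bot a)) (.inl (EReal.coe_ne_top a))] at hlt
  have htop : f (u + t • h) ≠ ⊤ := ne_top_of_lt hlt
  refine ⟨u + t • h, _, (EReal.coe_toReal htop (hnotbot _)).symm, ?_⟩
  rw [dist_eq_norm, add_sub_cancel_left, norm_smul, hh, mul_one, Real.norm_of_nonneg ht.le]
  rw [← EReal.coe_toReal htop (hnotbot _)] at hlt
  norm_cast at hlt
  linarith

lemma exists_le_zero_mul_dist_eq (hconv : ERealConvex f)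
    {u y : E} {a b : ℝ} (hu : f u = a) (hy : f y = b) (ha : 0 < a) (hb : b < 0) :
    ∃ w, f w ≤ 0 ∧ (a - b) * dist w u = a * dist y u := by
  have hab : 0 < a - b := by linarith
  set s := a / (a - b)
  have hs0 : 0 < s := div_pos ha hab
  have hs1 : s < 1 := (div_lt_one hab).2 (by linarith)
  have hsab : s * (a - b) = a := div_mul_cancel₀ _ hab.ne'
  refine ⟨s • y + (1 - s) • u, ?_, ?_⟩
  · calc f (s • y + (1 - s) • u) ≤ (s : EReal) * f y + ((1 - s : ℝ) : EReal) * f u :=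
          hconv y u s hs0 hs1
      _ = ((s * b + (1 - s) * a : ℝ) : EReal) := by rw [hy, hu]; norm_cast
      _ = 0 := by
          rw [EReal.coe_eq_zero]
          linear_combination -hsab
  · rw [dist_eq_norm, dist_eq_norm, show s • y + (1 - s) • u - u = s • (y - u) by module,
      norm_smul, Real.norm_of_nonneg hs0.le, ← mul_assoc, mul_comm (a - b), hsab]

/-- Stopping on the segment `[u, y]` where `f` reaches `0` keeps the descent rate `c`. -/
lemma exists_max_zero_add_mul_dist_lt (hconv : ERealConvex f)
    (hnotbot : ∀ x, f x ≠ ⊥) {u y : E} {a b c : ℝ} (hu : f u = a) (ha : 0 < a) (hy : f y = b)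
    (hlt : b + c * dist y u < a) : ∃ w, ∃ b' : ℝ, f w = b' ∧ max b' 0 + c * dist w u < a := by
  rcases le_or_gt 0 b with hb | hb
  · exact ⟨y, b, hy, by rwa [max_eq_left hb]⟩
  obtain ⟨w, hw, hdist⟩ := exists_le_zero_mul_dist_eq hconv hu hy ha hb
  refine ⟨w, (f w).toReal, (EReal.coe_toReal (ne_top_of_le_ne_top EReal.zero_ne_top hw)
    (hnotbot w)).symm, ?_⟩
  rw [max_eq_right (EReal.toReal_nonpos hw), zero_add]
  have hab : 0 < a - b := by linarith
  have : (a - b) * (c * dist w u) < (a - b) * a :=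
    calc (a - b) * (c * dist w u) = a * (c * dist y u) := by linear_combination c * hdist
      _ < a * (a - b) := by gcongr; linarith
      _ = (a - b) * a := mul_comm _ _
  exact lt_of_mul_lt_mul_left this hab.le

lemma exists_max_zero_add_mul_dist_lt_of_lt_steepestDescent (hnotbot : ∀ x, f x ≠ ⊥)
    (hconv : ERealConvex f) {u : E} {a c : ℝ} (hu : f u = a) (ha : 0 < a)
    (hc : (c : EReal) < steepestDescent f u) :
    ∃ w, ∃ b : ℝ, f w = b ∧ max b 0 + c * dist w u < a := by
  obtain ⟨y, b, hy, hlt⟩ := exists_add_mul_dist_lt_of_lt_steepestDescent hnotbot hu hc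
  exact exists_max_zero_add_mul_dist_lt hconv hnotbot hu ha hy hlt

theorem mul_infDist_le_of_forall_lt_steepestDescent [CompleteSpace E] (hnotbot : ∀ x, f x ≠ ⊥)
    (hlsc : LowerSemicontinuous f) (hconv : ERealConvex f)
    {c : ℝ} (hc : 0 < c) (hslope : ∀ u, f u ≠ ⊤ → 0 < f u → (c : EReal) < steepestDescent f u)
    {x : E} (hx : 0 < f x) (hxtop : f x ≠ ⊤) :
    c * infDist x {y | f y ≤ 0} ≤ (f x).toReal := by
  obtain ⟨z, hz, hzx⟩ := exists_nonpos_mul_dist_le_toReal hlsc hnotbot hc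
    (fun u a hu ha => exists_max_zero_add_mul_dist_lt_of_lt_steepestDescent hnotbot hconv hu ha
      (hslope u (hu ▸ EReal.coe_ne_top a) (hu ▸ EReal.coe_pos.2 ha))) hx.le hxtop
  calc c * infDist x {y | f y ≤ 0} ≤ c * dist z x := by
        rw [dist_comm]; exact mul_le_mul_of_nonneg_left (infDist_le_dist_of_mem hz) hc.le
    _ ≤ (f x).toReal := hzx

theorem sInf_steepestDescent_le_div_infDist [CompleteSpace E] (hnotbot : ∀ x, f x ≠ ⊥)
    (hlsc : LowerSemicontinuous f) (hconv : ERealConvex f)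
    (hne : {y | f y ≤ 0}.Nonempty) {x : E} (hx : 0 < f x) :
    sInf {z | ∃ u, f u ≠ ⊤ ∧ 0 < f u ∧ z = steepestDescent f u} ≤
      f x / (infDist x {y | f y ≤ 0} : EReal) := by
  have hd := infDist_pos_of_pos (hlsc.isClosed_preimage 0) hne hx
  by_cases hxtop : f x = ⊤
  · rw [hxtop, EReal.top_div_of_pos_ne_top (EReal.coe_pos.2 hd) (EReal.coe_ne_top _)]
    exact le_top
  rw [← EReal.coe_toReal hxtop (hnotbot x), ← EReal.coe_div]
  by_contra! hlt
  obtain ⟨c, hxc, hcm⟩ := EReal.lt_iff_exists_real_btwn.1 hlt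
  rw [EReal.coe_lt_coe_iff, div_lt_iff₀ hd] at hxc
  have hc : 0 < c := pos_of_mul_pos_left ((EReal.toReal_pos hx hxtop).trans hxc) hd.le
  have := mul_infDist_le_of_forall_lt_steepestDescent hnotbot hlsc hconv hc
    (fun u hu hu0 => hcm.trans_le (sInf_le ⟨u, hu, hu0, rfl⟩)) hx hxtop
  linarith

end DescentRate

open scoped RealInnerProductSpace

theorem stmt4_general (n : ℕ) (f : EuclideanSpace ℝ (Fin n) → EReal)
    (hnotbot : ∀ x, f x ≠ ⊥)
    (hlsc : LowerSemicontinuous f)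
    (hconv : ∀ x y : EuclideanSpace ℝ (Fin n), ∀ t : ℝ, 0 < t → t < 1 →
      f (t • x + (1 - t) • y) ≤ (t : EReal) * f x + ((1 - t : ℝ) : EReal) * f y)
    (hS : {x : EuclideanSpace ℝ (Fin n) | f x ≤ 0}.Nonempty) :
    sInf {z : EReal | ∃ x : EuclideanSpace ℝ (Fin n), 0 < f x ∧
        z = f x / ((Metric.infDist x {y | f y ≤ 0} : ℝ) : EReal)} =
      sInf {z : EReal | ∃ x : EuclideanSpace ℝ (Fin n), f x ≠ ⊤ ∧ 0 < f x ∧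
        z = - sInf {w : EReal | ∃ h : EuclideanSpace ℝ (Fin n), ‖h‖ = 1 ∧
          w = sInf {v : EReal | ∃ t : ℝ, 0 < t ∧
            v = (f (x + t • h) - f x) / ((t : ℝ) : EReal)}}} := by
  apply le_antisymm
  · refine le_sInf ?_
    rintro _ ⟨x, -, hx, rfl⟩
    exact (div_infDist_le_steepestDescent (hlsc.isClosed_preimage 0) hS hx).trans'
      (sInf_le ⟨x, hx, rfl⟩)
  · refine le_sInf ?_
    rintro _ ⟨x, hx, rfl⟩
    exact sInf_steepestDescent_le_div_infDist hnotbot hlsc hconv hS hx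

/-- for a proper lsc convex function `f : ℝⁿ → ℝ ∪ {+∞}` with nonempty
lower level set `S_f = {x | f x ≤ 0}`, the global error bound modulus
`Er(f) = inf { f x / dist(x, S_f) : f x > 0 }` equals
`inf { - inf_{‖h‖=1} d⁺f(x,h) : x ∈ dom f, f x > 0 }`, as an equality in `[0,+∞]`
(both infima over an empty index set being `+∞`, and the quotient being `+∞`
when `f x = +∞`).  Values are taken in `EReal`; `f` never takes the value `-∞`,
is somewhere finite (proper), lower semicontinuous and convex, and
`d⁺f(x,h) = inf_{t>0} (f(x+th) - f x)/t`. -/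
theorem stmt4 (n : ℕ) (hn : 1 ≤ n) (f : EuclideanSpace ℝ (Fin n) → EReal)
    (hproper : ∃ x, f x ≠ ⊤) (hnotbot : ∀ x, f x ≠ ⊥)
    (hlsc : LowerSemicontinuous f)
    (hconv : ∀ x y : EuclideanSpace ℝ (Fin n), ∀ t : ℝ, 0 < t → t < 1 →
      f (t • x + (1 - t) • y) ≤ (t : EReal) * f x + ((1 - t : ℝ) : EReal) * f y)
    (hS : {x : EuclideanSpace ℝ (Fin n) | f x ≤ 0}.Nonempty) :
    sInf {z : EReal | ∃ x : EuclideanSpace ℝ (Fin n), 0 < f x ∧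
        z = f x / ((Metric.infDist x {y | f y ≤ 0} : ℝ) : EReal)} =
      sInf {z : EReal | ∃ x : EuclideanSpace ℝ (Fin n), f x ≠ ⊤ ∧ 0 < f x ∧
        z = - sInf {w : EReal | ∃ h : EuclideanSpace ℝ (Fin n), ‖h‖ = 1 ∧
          w = sInf {v : EReal | ∃ t : ℝ, 0 < t ∧
            v = (f (x + t • h) - f x) / ((t : ℝ) : EReal)}}} :=
  stmt4_general n f hnotbot hlsc hconv hS
end

section
/- Let m, n ≥ 1, let A be an m×n real matrix with rows a_1^T, …, a_m^T and let b ∈ ℝ^m. Then the system Ax ≤ b admits an error bound if and only if min_{‖h‖=1} max_{i∈J} ⟨a_i, h⟩ < 0 holds for every J ∈ 𝒥 := { J_{A,b}(x) : x ∈ ℝ^n, φ(x) > 0 }. -/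
/-!
If `Ax ≤ b` is feasible, the direction from an infeasible point `x` towards a feasible point
decreases every constraint that is active at `x`. Conversely, the active set `J_{A,b}(x)` takes
only finitely many values, so the descent directions for the various active sets can be chosen with
a common rate `c > 0`: at every infeasible point, `φ` drops at rate `c` along some unit vector.
Minimising `φ + (c / 2) · dist(·, x)` over a large ball then yields a point of `P_{A,b}` at distance
at most `2 φ(x) / c` from `x`.
-/

open scoped RealInnerProductSpace
open Filter Topology Metric Set

theorem exists_nonpos_of_forall_exists_descent {X : Type*} [PseudoMetricSpace X] [ProperSpace X]
    {f : X → ℝ} (hf : LowerSemicontinuous f) {c : ℝ} (hc : 0 < c)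
    (hdesc : ∀ y, 0 < f y → ∀ ε > 0,
      ∃ z, 0 < dist z y ∧ dist z y ≤ ε ∧ f z + c * dist z y ≤ f y)
    (x : X) : ∃ y, f y ≤ 0 ∧ c * dist y x ≤ 2 * max (f x) 0 := by
  rcases le_or_gt (f x) 0 with hx | hx
  · exact ⟨x, hx, by simp⟩
  set R := 2 * f x / c
  have hF : LowerSemicontinuous fun z => f z + c / 2 * dist z x :=
    hf.add (continuous_const.mul (continuous_id.dist continuous_const)).lowerSemicontinuous
  obtain ⟨y, hyB, hmin⟩ := (hF.lowerSemicontinuousOn _).exists_isMinOn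
    ⟨x, mem_closedBall_self (by positivity)⟩ (isCompact_closedBall x R)
  have hyR : dist y x ≤ R := mem_closedBall.1 hyB
  have hFy : f y + c / 2 * dist y x ≤ f x := by
    simpa using hmin (mem_closedBall_self (by positivity : 0 ≤ R))
  refine ⟨y, ?_, ?_⟩
  · by_contra! hy
    have hyx : dist y x < R := by
      rw [lt_div_iff₀ hc]
      linarith
    obtain ⟨z, hzy, hzε, hz⟩ := hdesc y hy (R - dist y x) (by linarith)
    have hzR : dist z x ≤ R := (dist_triangle z y x).trans (by linarith)
    have hFz : f y + c / 2 * dist y x ≤ f z + c / 2 * dist z x := hmin hzR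
    -- moving to `z` costs at most `c / 2 · dist z y` in the penalty but gains `c · dist z y` in `f`
    nlinarith [mul_le_mul_of_nonneg_left (dist_triangle z y x) hc.le, mul_pos hc hzy]
  · calc c * dist y x ≤ c * R := by gcongr
      _ = 2 * max (f x) 0 := by rw [max_eq_left hx.le, mul_div_cancel₀ _ hc.ne']

variable {ι E : Type*} [NormedAddCommGroup E] [InnerProductSpace ℝ E]

section Polyhedron

variable (a : ι → E) (b : ι → ℝ)

noncomputable def maxResidual (x : E) : ℝ := ⨆ i, (⟪a i, x⟫ - b i)

def activeSet (x : E) : Set ι := {i | ⟪a i, x⟫ - b i = maxResidual a b x}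

def feasibleSet : Set E := {x | ∀ i, ⟪a i, x⟫ ≤ b i}

variable {a b} [Finite ι]

theorem residual_le_maxResidual (i : ι) (x : E) : ⟪a i, x⟫ - b i ≤ maxResidual a b x :=
  le_ciSup (f := fun j => ⟪a j, x⟫ - b j) (finite_range _).bddAbove i

theorem mem_feasibleSet_of_maxResidual_nonpos {x : E} (hx : maxResidual a b x ≤ 0) :
    x ∈ feasibleSet a b :=
  fun i => sub_nonpos.1 ((residual_le_maxResidual i x).trans hx)

theorem lowerSemicontinuous_maxResidual : LowerSemicontinuous (maxResidual a b) :=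
  lowerSemicontinuous_ciSup (fun _ => (finite_range _).bddAbove) fun _ =>
    ((continuous_const.inner continuous_id).sub continuous_const).lowerSemicontinuous

theorem nonempty_activeSet {x : E} (hx : 0 < maxResidual a b x) : (activeSet a b x).Nonempty := by
  have : Nonempty ι := by
    by_contra hι
    rw [not_nonempty_iff] at hι
    simp [maxResidual] at hx
  obtain ⟨i, hi⟩ := Finite.exists_max fun i => ⟪a i, x⟫ - b i
  exact ⟨i, le_antisymm (residual_le_maxResidual i x) (ciSup_le hi)⟩

theorem exists_unit_inner_neg_of_mem_feasibleSet {x y : E} (hy : y ∈ feasibleSet a b)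
    (hx : 0 < maxResidual a b x) : ∃ h : E, ‖h‖ = 1 ∧ ∀ i ∈ activeSet a b x, ⟪a i, h⟫ < 0 := by
  have hw : ∀ i ∈ activeSet a b x, ⟪a i, y - x⟫ < 0 := fun i (hi : _ = _) => by
    rw [inner_sub_right]
    linarith [hy i]
  have hne : y - x ≠ 0 := by
    obtain ⟨i, hi⟩ := nonempty_activeSet hx
    intro h0
    simpa [h0] using hw i hi
  refine ⟨‖y - x‖⁻¹ • (y - x), norm_smul_inv_norm hne, fun i hi => ?_⟩
  rw [real_inner_smul_right]
  exact mul_neg_of_pos_of_neg (inv_pos.2 (norm_pos_iff.2 hne)) (hw i hi)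

theorem eventually_maxResidual_add_smul_le {x h : E} {c : ℝ} (hx : 0 < maxResidual a b x)
    (hh : ∀ i ∈ activeSet a b x, ⟪a i, h⟫ ≤ -c) :
    ∀ᶠ s in 𝓝[>] (0 : ℝ), maxResidual a b (x + s • h) ≤ maxResidual a b x - c * s := by
  have : Nonempty ι := ⟨(nonempty_activeSet hx).some⟩
  have hres : ∀ i (s : ℝ), ⟪a i, x + s • h⟫ - b i = (⟪a i, x⟫ - b i) + s * ⟪a i, h⟫ := by
    intro i s
    rw [inner_add_right, real_inner_smul_right]
    ring
  have hall : ∀ i, ∀ᶠ s in 𝓝[>] (0 : ℝ),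
      (⟪a i, x⟫ - b i) + s * ⟪a i, h⟫ ≤ maxResidual a b x - c * s := by
    intro i
    by_cases hi : i ∈ activeSet a b x
    · filter_upwards [self_mem_nhdsWithin] with s (hs : 0 < s)
      rw [show ⟪a i, x⟫ - b i = maxResidual a b x from hi]
      nlinarith [hh i hi]
    · have hlt : ⟪a i, x⟫ - b i < maxResidual a b x :=
        (residual_le_maxResidual i x).lt_of_ne hi
      have hl : Continuous fun s : ℝ => (⟪a i, x⟫ - b i) + s * ⟪a i, h⟫ := by fun_prop
      have hr : Continuous fun s : ℝ => maxResidual a b x - c * s := by fun_prop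
      exact eventually_nhdsWithin_of_eventually_nhds
        ((hl.continuousAt.eventually_lt hr.continuousAt (by simpa using hlt)).mono
          fun _ => le_of_lt)
  filter_upwards [eventually_all.2 hall] with s hs
  exact ciSup_le fun i => (hres i s).trans_le (hs i)

theorem exists_uniform_descent_rate
    (H : ∀ x, 0 < maxResidual a b x → ∃ h : E, ‖h‖ = 1 ∧ ∀ i ∈ activeSet a b x, ⟪a i, h⟫ < 0) :
    ∃ c > 0, ∀ x, 0 < maxResidual a b x →
      ∃ h : E, ‖h‖ = 1 ∧ ∀ i ∈ activeSet a b x, ⟪a i, h⟫ ≤ -c := by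
  have hJ : ∀ J : Set ι, ∀ᶠ c in 𝓝 (0 : ℝ), ∀ x, 0 < maxResidual a b x → activeSet a b x = J →
      ∃ h : E, ‖h‖ = 1 ∧ ∀ i ∈ J, ⟪a i, h⟫ ≤ -c := by
    intro J
    by_cases hJ_mem : ∃ x, 0 < maxResidual a b x ∧ activeSet a b x = J
    · obtain ⟨x₀, hx₀, rfl⟩ := hJ_mem
      obtain ⟨h, hh, hneg⟩ := H x₀ hx₀
      have hall : ∀ i, ∀ᶠ c in 𝓝 (0 : ℝ), i ∈ activeSet a b x₀ → ⟪a i, h⟫ ≤ -c := by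
        intro i
        by_cases hi : i ∈ activeSet a b x₀
        · filter_upwards [eventually_lt_nhds (neg_pos.2 (hneg i hi))] with c hc
          exact fun _ => by linarith
        · exact Eventually.of_forall fun _ hi' => absurd hi' hi
      filter_upwards [eventually_all.2 hall] with c hc x _ _
      exact ⟨h, hh, hc⟩
    · exact Eventually.of_forall fun _ x hx hxJ => absurd ⟨x, hx, hxJ⟩ hJ_mem
  obtain ⟨c, hc, hpos⟩ :=
    (((eventually_all.2 hJ).filter_mono nhdsWithin_le_nhds).and
      (self_mem_nhdsWithin : Ioi (0 : ℝ) ∈ 𝓝[>] 0)).exists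
  exact ⟨c, hpos, fun x hx => hc _ x hx rfl⟩

theorem exists_mem_feasibleSet_dist_le [ProperSpace E] {c : ℝ} (hc : 0 < c)
    (H : ∀ x, 0 < maxResidual a b x →
      ∃ h : E, ‖h‖ = 1 ∧ ∀ i ∈ activeSet a b x, ⟪a i, h⟫ ≤ -c) (x : E) :
    ∃ y ∈ feasibleSet a b, c * dist y x ≤ 2 * max (maxResidual a b x) 0 := by
  suffices hdesc : ∀ y, 0 < maxResidual a b y → ∀ ε > 0, ∃ z, 0 < dist z y ∧ dist z y ≤ ε ∧
      maxResidual a b z + c * dist z y ≤ maxResidual a b y by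
    obtain ⟨y, hy, hyx⟩ :=
      exists_nonpos_of_forall_exists_descent lowerSemicontinuous_maxResidual hc hdesc x
    exact ⟨y, mem_feasibleSet_of_maxResidual_nonpos hy, hyx⟩
  intro y hy ε hε
  obtain ⟨h, hh, hact⟩ := H y hy
  obtain ⟨s, hs, hs0, hsε⟩ :=
    ((eventually_maxResidual_add_smul_le hy hact).and (Ioc_mem_nhdsGT hε)).exists
  have hd : dist (y + s • h) y = s := by
    rw [dist_eq_norm, add_sub_cancel_left, norm_smul, hh, mul_one, Real.norm_of_nonneg hs0.le]
  exact ⟨y + s • h, hd.symm ▸ hs0, hd.symm ▸ hsε, by rw [hd]; linarith⟩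

theorem errorBound_iff_forall_exists_unit_inner_neg [ProperSpace E] :
    ((feasibleSet a b).Nonempty ∧ ∃ c : ℝ, 0 < c ∧ ∀ x : E,
        c * infDist x (feasibleSet a b) ≤ max (maxResidual a b x) 0) ↔
      ∀ x, 0 < maxResidual a b x →
        ∃ h : E, ‖h‖ = 1 ∧ ∀ i ∈ activeSet a b x, ⟪a i, h⟫ < 0 := by
  constructor
  · rintro ⟨⟨y, hy⟩, -⟩ x hx
    exact exists_unit_inner_neg_of_mem_feasibleSet hy hx
  · intro H
    obtain ⟨c, hc, Hc⟩ := exists_uniform_descent_rate H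
    have hP := exists_mem_feasibleSet_dist_le hc Hc
    refine ⟨(hP 0).imp fun _ hy => hy.1, c / 2, half_pos hc, fun x => ?_⟩
    obtain ⟨y, hyP, hyx⟩ := hP x
    calc c / 2 * infDist x (feasibleSet a b) ≤ c / 2 * dist y x := by
          gcongr
          rw [dist_comm]
          exact infDist_le_dist_of_mem hyP
      _ ≤ max (maxResidual a b x) 0 := by linarith

end Polyhedron

theorem sInf_sSup_inner_lt_zero_iff [Finite ι] (a : ι → E) {J : Set ι} (hJ : J.Nonempty) :
    sInf {r : ℝ | ∃ h : E, ‖h‖ = 1 ∧ r = sSup {s : ℝ | ∃ i ∈ J, s = ⟪a i, h⟫}} < 0 ↔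
      ∃ h : E, ‖h‖ = 1 ∧ ∀ i ∈ J, ⟪a i, h⟫ < 0 := by
  have hT : ∀ h : E, {s : ℝ | ∃ i ∈ J, s = ⟪a i, h⟫} = (fun i => ⟪a i, h⟫) '' J := by
    intro h
    ext s
    simp [eq_comm]
  have hsup : ∀ h : E, sSup {s : ℝ | ∃ i ∈ J, s = ⟪a i, h⟫} < 0 ↔ ∀ i ∈ J, ⟪a i, h⟫ < 0 := by
    intro h
    rw [hT, (J.toFinite.image _).csSup_lt_iff (hJ.image _), forall_mem_image]
  constructor
  · intro hlt
    have hne : {r : ℝ | ∃ h : E, ‖h‖ = 1 ∧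
        r = sSup {s : ℝ | ∃ i ∈ J, s = ⟪a i, h⟫}}.Nonempty := by
      by_contra hS
      rw [not_nonempty_iff_eq_empty.1 hS, Real.sInf_empty] at hlt
      exact lt_irrefl _ hlt
    obtain ⟨_, ⟨h, hh, rfl⟩, hr⟩ := exists_lt_of_csInf_lt hne hlt
    exact ⟨h, hh, (hsup h).1 hr⟩
  · rintro ⟨h, hh, hneg⟩
    obtain ⟨i₀, hi₀⟩ := hJ
    have hbdd : BddBelow {r : ℝ | ∃ h : E, ‖h‖ = 1 ∧
        r = sSup {s : ℝ | ∃ i ∈ J, s = ⟪a i, h⟫}} := by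
      refine ⟨-‖a i₀‖, ?_⟩
      rintro _ ⟨h', hh', rfl⟩
      rw [hT]
      refine le_csSup_of_le ((J.toFinite.image _).bddAbove) (mem_image_of_mem _ hi₀) ?_
      exact neg_le_of_abs_le (by simpa [hh'] using abs_real_inner_le_norm (a i₀) h')
    exact (csInf_le hbdd ⟨h, hh, rfl⟩).trans_lt ((hsup h).2 hneg)

theorem stmt5_general (m n : ℕ)
    (a : Fin m → EuclideanSpace ℝ (Fin n)) (b : Fin m → ℝ) :
    (({x : EuclideanSpace ℝ (Fin n) | ∀ i, ⟪a i, x⟫ ≤ b i}.Nonempty ∧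
        ∃ c : ℝ, 0 < c ∧ ∀ x : EuclideanSpace ℝ (Fin n),
          c * Metric.infDist x {y : EuclideanSpace ℝ (Fin n) | ∀ i, ⟪a i, y⟫ ≤ b i} ≤
            max (⨆ i, (⟪a i, x⟫ - b i)) 0) ↔
      ∀ J : Set (Fin m),
        (∃ x : EuclideanSpace ℝ (Fin n), 0 < (⨆ i, (⟪a i, x⟫ - b i)) ∧
          J = {i | ⟪a i, x⟫ - b i = ⨆ j, (⟪a j, x⟫ - b j)}) →
        sInf {r : ℝ | ∃ h : EuclideanSpace ℝ (Fin n), ‖h‖ = 1 ∧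
          r = sSup {s : ℝ | ∃ i ∈ J, s = ⟪a i, h⟫}} < 0) := by
  change _ ↔ ∀ J, (∃ x, 0 < maxResidual a b x ∧ J = activeSet a b x) → _
  refine (errorBound_iff_forall_exists_unit_inner_neg (a := a) (b := b)).trans
    ⟨fun H J ⟨x, hx, hJ⟩ => ?_, fun H x hx => ?_⟩
  · subst hJ
    exact (sInf_sSup_inner_lt_zero_iff a (nonempty_activeSet hx)).2 (H x hx)
  · exact (sInf_sSup_inner_lt_zero_iff a (nonempty_activeSet hx)).1 (H _ ⟨x, hx, rfl⟩)

/-- the linear inequality system `Ax ≤ b` (with rows `a i` of `A`)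
admits an error bound iff `min_{‖h‖=1} max_{i ∈ J} ⟨a_i, h⟩ < 0` for every
`J ∈ 𝒥 := { J_{A,b}(x) : φ(x) > 0 }`, where `φ(x) = max_i (⟨a_i,x⟩ - b_i)` and
`J_{A,b}(x)` is the active index set at `x`. -/
theorem stmt5 (m n : ℕ) (hm : 1 ≤ m) (hn : 1 ≤ n)
    (a : Fin m → EuclideanSpace ℝ (Fin n)) (b : Fin m → ℝ) :
    (({x : EuclideanSpace ℝ (Fin n) | ∀ i, ⟪a i, x⟫ ≤ b i}.Nonempty ∧
        ∃ c : ℝ, 0 < c ∧ ∀ x : EuclideanSpace ℝ (Fin n),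
          c * Metric.infDist x {y : EuclideanSpace ℝ (Fin n) | ∀ i, ⟪a i, y⟫ ≤ b i} ≤
            max (⨆ i, (⟪a i, x⟫ - b i)) 0) ↔
      ∀ J : Set (Fin m),
        (∃ x : EuclideanSpace ℝ (Fin n), 0 < (⨆ i, (⟪a i, x⟫ - b i)) ∧
          J = {i | ⟪a i, x⟫ - b i = ⨆ j, (⟪a j, x⟫ - b j)}) →
        sInf {r : ℝ | ∃ h : EuclideanSpace ℝ (Fin n), ‖h‖ = 1 ∧
          r = sSup {s : ℝ | ∃ i ∈ J, s = ⟪a i, h⟫}} < 0) :=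
  stmt5_general m n a b
end

section
/- Let 1 ≤ m ≤ n, let A be an m×n real matrix whose rows a_1^T, …, a_m^T are linearly independent, and let b ∈ ℝ^m. Define φ(x) := max_{1≤i≤m}(⟨a_i, x⟩ − b_i) and J_{A,b}(x) := {i : ⟨a_i, x⟩ − b_i = φ(x)}. Then { J_{A,b}(x) : x ∈ ℝ^n, φ(x) > 0 } = { J ⊆ {1,…,m} : J ≠ ∅ }; in particular, for every nonempty J ⊆ {1,…,m} there exists x̄ ∈ ℝ^n with φ(x̄) > 0 and J_{A,b}(x̄) = J. -/
open scoped RealInnerProductSpace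

/- Since the rows are linearly independent, the map `x ↦ (⟨a_i, x⟩)_i` is onto, so we may prescribe
`⟨a_i, x⟩ - b_i` to be the indicator of `J`; then `φ(x) = 1` and `J_{A,b}(x) = J`. Conversely the
maximum of finitely many numbers is attained, so every active set at a point with `φ(x) > 0`
is nonempty. -/

open Matrix in
theorem LinearIndependent.exists_inner_eq {ι E : Type*} [Fintype ι] [NormedAddCommGroup E]
    [InnerProductSpace ℝ E] {a : ι → E} (ha : LinearIndependent ℝ a) (v : ι → ℝ) :
    ∃ x : E, ∀ i, ⟪a i, x⟫ = v i := by
  classical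
  set G := gram ℝ a
  have hG : IsUnit G.det := (det_gram_ne_zero_iff_linearIndependent.mpr ha).isUnit
  have inner_combination (c : ι → ℝ) (i : ι) : ⟪a i, ∑ j, c j • a j⟫ = (G *ᵥ c) i := by
    simp [G, mulVec, dotProduct, inner_sum, real_inner_smul_right, mul_comm]
  refine ⟨∑ j, (G⁻¹ *ᵥ v) j • a j, fun i => ?_⟩
  rw [inner_combination, mulVec_mulVec, mul_nonsing_inv G hG, one_mulVec]

theorem ciSup_indicator_one {ι α : Type*} [Finite ι] [ConditionallyCompleteLattice α] [Zero α]
    [One α] [ZeroLEOneClass α] {J : Set ι} (hJ : J.Nonempty) : ⨆ i, J.indicator 1 i = (1 : α) := by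
  obtain ⟨j, hj⟩ := hJ
  have : Nonempty ι := ⟨j⟩
  refine le_antisymm (ciSup_le fun i => ?_) ?_
  · by_cases hi : i ∈ J <;> simp [hi]
  · simpa [hj] using le_ciSup (Set.finite_range (J.indicator (1 : ι → α))).bddAbove j

theorem stmt8_general (m n : ℕ)
    (a : Fin m → EuclideanSpace ℝ (Fin n)) (ha : LinearIndependent ℝ a)
    (b : Fin m → ℝ) :
    {J : Set (Fin m) | ∃ x : EuclideanSpace ℝ (Fin n),
        0 < (⨆ i, (⟪a i, x⟫ - b i)) ∧
        J = {i | ⟪a i, x⟫ - b i = ⨆ j, (⟪a j, x⟫ - b j)}} =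
      {J : Set (Fin m) | J.Nonempty} := by
  ext J
  constructor
  · rintro ⟨x, hpos, rfl⟩
    have : Nonempty (Fin m) := by
      by_contra h
      -- an empty supremum of reals is `0`
      simp [not_nonempty_iff.mp h] at hpos
    exact exists_eq_ciSup_of_finite
  · intro hJ
    obtain ⟨x, hx⟩ := ha.exists_inner_eq (b + J.indicator 1)
    have hslack (i : Fin m) : ⟪a i, x⟫ - b i = J.indicator 1 i := by
      simp [hx i]
    refine ⟨x, ?_, ?_⟩ <;> simp only [hslack, ciSup_indicator_one hJ]
    · exact one_pos
    · ext i
      exact (Set.indicator_eq_one_iff_mem ℝ).symm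

/-- if `1 ≤ m ≤ n` and the rows `a₁, …, a_m` of `A` are linearly
independent, then `{ J_{A,b}(x) : φ(x) > 0 } = { J ⊆ {1,…,m} : J ≠ ∅ }`, where
`φ(x) = max_i (⟨a_i, x⟩ - b_i)` and `J_{A,b}(x)` is the active index set at `x`. -/
theorem stmt8 (m n : ℕ) (hm : 1 ≤ m) (hmn : m ≤ n)
    (a : Fin m → EuclideanSpace ℝ (Fin n)) (ha : LinearIndependent ℝ a)
    (b : Fin m → ℝ) :
    {J : Set (Fin m) | ∃ x : EuclideanSpace ℝ (Fin n),
        0 < (⨆ i, (⟪a i, x⟫ - b i)) ∧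
        J = {i | ⟪a i, x⟫ - b i = ⨆ j, (⟪a j, x⟫ - b j)}} =
      {J : Set (Fin m) | J.Nonempty} :=
  stmt8_general m n a ha b
end

section
/- Let 1 ≤ m ≤ n, let A be an m×n real matrix whose rows a_1^T, …, a_m^T are linearly independent, and let b ∈ ℝ^m. Define φ(x) := max_{1≤i≤m}(⟨a_i, x⟩ − b_i) and J_{A,b}(x) := {i : ⟨a_i, x⟩ − b_i = φ(x)}. Then { J_{A,b}(x) : x ∈ ℝ^n, φ(x) = 0 } = { I ⊆ {1,…,m} : I ≠ ∅ }; in particular, for every nonempty I ⊆ {1,…,m} there exists x̄ ∈ ℝ^n with φ(x̄) = 0 and J_{A,b}(x̄) = I. -/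
open scoped RealInnerProductSpace

/-- if `1 ≤ m ≤ n` and the rows `a₁, …, a_m` of `A` are linearly
independent, then `{ J_{A,b}(x) : φ(x) = 0 } = { I ⊆ {1,…,m} : I ≠ ∅ }`, where
`φ(x) = max_i (⟨a_i, x⟩ - b_i)` and `J_{A,b}(x)` is the active index set at `x`. -/
theorem stmt9 (m n : ℕ) (hm : 1 ≤ m) (hmn : m ≤ n)
    (a : Fin m → EuclideanSpace ℝ (Fin n)) (ha : LinearIndependent ℝ a)
    (b : Fin m → ℝ) :
    {I : Set (Fin m) | ∃ x : EuclideanSpace ℝ (Fin n),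
        (⨆ i, (⟪a i, x⟫ - b i)) = 0 ∧
        I = {i | ⟪a i, x⟫ - b i = ⨆ j, (⟪a j, x⟫ - b j)}} =
      {I : Set (Fin m) | I.Nonempty} := by
  have hne : Nonempty (Fin m) := ⟨⟨0, hm⟩⟩
  ext I
  simp only [Set.mem_setOf_eq]
  constructor
  · rintro ⟨x, hx, rfl⟩
    obtain ⟨i, hi⟩ := Finite.exists_max (fun i => ⟪a i, x⟫ - b i)
    refine ⟨i, ?_⟩
    have hbdd : BddAbove (Set.range fun j => ⟪a j, x⟫ - b j) :=
      (Set.finite_range _).bddAbove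
    exact le_antisymm (le_ciSup hbdd i) (ciSup_le hi)
  · rintro ⟨i0, hi0⟩
    classical
    -- surjectivity of x ↦ (⟪a i, x⟫)_i
    have hsurj : ∀ t : Fin m → ℝ, ∃ x : EuclideanSpace ℝ (Fin n), ∀ i, ⟪a i, x⟫ = t i := by
      set L : EuclideanSpace ℝ (Fin n) →ₗ[ℝ] (Fin m → ℝ) :=
        { toFun := fun x i => ⟪a i, x⟫
          map_add' := fun x y => by funext i; simp [inner_add_right]
          map_smul' := fun c x => by funext i; simp [inner_smul_right] } with hL
      have hker : LinearMap.ker L = (Submodule.span ℝ (Set.range a))ᗮ := by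
        ext x
        simp only [LinearMap.mem_ker, Submodule.mem_orthogonal, hL, LinearMap.coe_mk,
          AddHom.coe_mk, funext_iff, Pi.zero_apply]
        constructor
        · intro h u hu
          induction hu using Submodule.span_induction with
          | mem u hu => obtain ⟨i, rfl⟩ := hu; exact h i
          | zero => simp
          | add u v _ _ hu hv => simp [inner_add_left, hu, hv]
          | smul c u _ hu => simp [inner_smul_left, hu]
        · intro h i
          exact h (a i) (Submodule.subset_span ⟨i, rfl⟩)
      have hspan : Module.finrank ℝ (Submodule.span ℝ (Set.range a)) = m := by
        rw [finrank_span_eq_card ha, Fintype.card_fin]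
      have hranktop : LinearMap.range L = ⊤ := by
        apply Submodule.eq_top_of_finrank_eq
        have h1 := LinearMap.finrank_range_add_finrank_ker L
        have h2 := (Submodule.span ℝ (Set.range a)).finrank_add_finrank_orthogonal
        rw [hker] at h1
        rw [hspan] at h2
        have hE : Module.finrank ℝ (EuclideanSpace ℝ (Fin n)) = n := by
          simp [finrank_euclideanSpace]
        have hF : Module.finrank ℝ (Fin m → ℝ) = m := by simp
        omega
      intro t
      obtain ⟨x, hx⟩ := (LinearMap.range_eq_top.mp hranktop) t
      exact ⟨x, fun i => congrFun hx i⟩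
    obtain ⟨x, hx⟩ := hsurj (fun i => if i ∈ I then b i else b i - 1)
    have hval : ∀ i, ⟪a i, x⟫ - b i = if i ∈ I then 0 else -1 := by
      intro i
      rw [hx i]
      split <;> ring
    have hbdd : BddAbove (Set.range fun j => ⟪a j, x⟫ - b j) :=
      (Set.finite_range _).bddAbove
    have hsup : (⨆ j, (⟪a j, x⟫ - b j)) = 0 := by
      apply le_antisymm
      · apply ciSup_le
        intro j
        rw [hval j]
        split <;> norm_num
      · have := le_ciSup hbdd i0
        rwa [hval i0, if_pos hi0] at this
    refine ⟨x, hsup, ?_⟩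
    ext i
    simp only [Set.mem_setOf_eq, hsup, hval i]
    by_cases h : i ∈ I <;> simp [h]
end

section
/- Let m, n ≥ 1, let A be an m×n real matrix with rows a_1^T, …, a_m^T, let b ∈ ℝ^m, and define φ(x) := max_{1≤i≤m}(⟨a_i, x⟩ − b_i) and J_{A,b}(x) := {i : ⟨a_i, x⟩ − b_i = φ(x)}. If there exists x̄ ∈ ℝ^n with φ(x̄) > 0 and min_{‖h‖=1} max_{i ∈ J_{A,b}(x̄)} ⟨a_i, h⟩ ≥ 0, then the system Ax ≤ b does not admit an error bound. -/
open scoped RealInnerProductSpace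

/-- if there is `x̄` with `φ(x̄) > 0` and
`min_{‖h‖=1} max_{i ∈ J_{A,b}(x̄)} ⟨a_i, h⟩ ≥ 0`, then the system `Ax ≤ b`
does not admit an error bound. -/
theorem stmt11 (m n : ℕ) (hm : 1 ≤ m) (hn : 1 ≤ n)
    (a : Fin m → EuclideanSpace ℝ (Fin n)) (b : Fin m → ℝ)
    (xbar : EuclideanSpace ℝ (Fin n))
    (hpos : 0 < (⨆ i, (⟪a i, xbar⟫ - b i)))
    (hmin : 0 ≤ sInf {r : ℝ | ∃ h : EuclideanSpace ℝ (Fin n), ‖h‖ = 1 ∧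
      r = sSup {s : ℝ | ∃ i : Fin m,
        (⟪a i, xbar⟫ - b i = ⨆ j, (⟪a j, xbar⟫ - b j)) ∧ s = ⟪a i, h⟫}}) :
    ¬ ({x : EuclideanSpace ℝ (Fin n) | ∀ i, ⟪a i, x⟫ ≤ b i}.Nonempty ∧
        ∃ c : ℝ, 0 < c ∧ ∀ x : EuclideanSpace ℝ (Fin n),
          c * Metric.infDist x {y : EuclideanSpace ℝ (Fin n) | ∀ i, ⟪a i, y⟫ ≤ b i} ≤
            max (⨆ i, (⟪a i, x⟫ - b i)) 0) := by
  rintro ⟨⟨x0, hx0⟩, -⟩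
  haveI : Nonempty (Fin m) := Fin.pos_iff_nonempty.mp hm
  set act : Fin m → Prop :=
    fun i => ⟪a i, xbar⟫ - b i = ⨆ j, (⟪a j, xbar⟫ - b j) with hact
  -- sup attained
  obtain ⟨i0, hi0max⟩ := Finite.exists_max (fun i => ⟪a i, xbar⟫ - b i)
  have hi0 : act i0 :=
    le_antisymm (le_ciSup (f := fun j => ⟪a j, xbar⟫ - b j) (Finite.bddAbove_range _) i0) (ciSup_le hi0max)
  -- structure of the inner sets
  have Seq : ∀ g : EuclideanSpace ℝ (Fin n),
      {s : ℝ | ∃ i : Fin m, act i ∧ s = ⟪a i, g⟫} =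
        (fun i => ⟪a i, g⟫) '' {i | act i} := by
    intro g; ext s; simp [Set.mem_image, eq_comm, and_comm]
  have Sfin : ∀ g, ({s : ℝ | ∃ i : Fin m, act i ∧ s = ⟪a i, g⟫}).Finite := by
    intro g; rw [Seq g]; exact (Set.toFinite _).image _
  have Sne : ∀ g, ({s : ℝ | ∃ i : Fin m, act i ∧ s = ⟪a i, g⟫}).Nonempty :=
    fun g => ⟨⟪a i0, g⟫, i0, hi0, rfl⟩
  have Smem : ∀ g, sSup {s : ℝ | ∃ i : Fin m, act i ∧ s = ⟪a i, g⟫} ∈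
      {s : ℝ | ∃ i : Fin m, act i ∧ s = ⟪a i, g⟫} :=
    fun g => (Sne g).csSup_mem (Sfin g)
  -- big set bounded below
  have hB : BddBelow {r : ℝ | ∃ h : EuclideanSpace ℝ (Fin n), ‖h‖ = 1 ∧
      r = sSup {s : ℝ | ∃ i : Fin m, act i ∧ s = ⟪a i, h⟫}} := by
    refine ⟨-(Finset.univ.sup' Finset.univ_nonempty fun i => ‖a i‖), ?_⟩
    rintro r ⟨g, hg, rfl⟩
    obtain ⟨i, -, hi⟩ := Smem g
    rw [hi]
    have h1 : |⟪a i, g⟫| ≤ ‖a i‖ * ‖g‖ := abs_real_inner_le_norm _ _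
    have h2 : ‖a i‖ ≤ Finset.univ.sup' Finset.univ_nonempty fun i => ‖a i‖ :=
      Finset.le_sup' (f := fun i => ‖a i‖) (Finset.mem_univ i)
    rw [hg, mul_one] at h1
    linarith [neg_abs_le (⟪a i, g⟫)]
  -- the feasible point differs from xbar
  have hx0ne : x0 - xbar ≠ 0 := by
    intro he
    have hx : x0 = xbar := by
      have := sub_eq_zero.mp he; exact this
    have : (⨆ i, (⟪a i, xbar⟫ - b i)) ≤ 0 := by
      apply ciSup_le; intro i; rw [← hx]; linarith [hx0 i]
    linarith
  set d : EuclideanSpace ℝ (Fin n) := x0 - xbar with hdd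
  set g : EuclideanSpace ℝ (Fin n) := ‖d‖⁻¹ • d with hgd
  have hg1 : ‖g‖ = 1 := norm_smul_inv_norm hx0ne
  -- sInf ≤ value at g
  have hsle : sInf {r : ℝ | ∃ h : EuclideanSpace ℝ (Fin n), ‖h‖ = 1 ∧
      r = sSup {s : ℝ | ∃ i : Fin m, act i ∧ s = ⟪a i, h⟫}} ≤
      sSup {s : ℝ | ∃ i : Fin m, act i ∧ s = ⟪a i, g⟫} :=
    csInf_le hB ⟨g, hg1, rfl⟩
  have hge0 : 0 ≤ sSup {s : ℝ | ∃ i : Fin m, act i ∧ s = ⟪a i, g⟫} :=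
    le_trans hmin hsle
  obtain ⟨i, hiact, hival⟩ := Smem g
  have hig : 0 ≤ ⟪a i, g⟫ := by rw [← hival]; exact hge0
  have hid : 0 ≤ ⟪a i, d⟫ := by
    have : ⟪a i, g⟫ = ‖d‖⁻¹ * ⟪a i, d⟫ := real_inner_smul_right _ _ _
    rw [this] at hig
    have hdpos : 0 < ‖d‖ := norm_pos_iff.mpr hx0ne
    nlinarith [inv_pos.mpr hdpos]
  have hinner : ⟪a i, x0⟫ = ⟪a i, xbar⟫ + ⟪a i, d⟫ := by
    rw [hdd, inner_sub_right]; ring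
  have hphi : ⟪a i, xbar⟫ - b i = ⨆ j, (⟪a j, xbar⟫ - b j) := hiact
  have := hx0 i
  rw [hinner] at this
  linarith [hphi ▸ hpos]
end

section
/- Let n ≥ 1, let T be a nonempty compact metric space, and let a* : T → ℝ^n and b* : T → ℝ be continuous. Assume the solution set S := {x ∈ ℝ^n : ⟨a*(t), x⟩ ≤ b*(t) for all t ∈ T} is nonempty. Then σ(a*, b*) ≥ inf { | inf_{‖h‖=1} sup_{t∈J} ⟨a*(t), h⟩ | : J ∈ 𝒥 }, where 𝒥 := { J(x) : x ∈ ℝ^n, f(x) = 0 } and the infimum over an empty 𝒥 is +∞. -/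
open scoped RealInnerProductSpace

/-- If `φ ≤ 0` everywhere and `ψ < 0` wherever `φ = 0`, on a compact space, then
some positive multiple of `ψ` can be added to `φ` keeping it nonpositive. -/
lemma stmt15_aux_scale {T : Type*} [TopologicalSpace T] [CompactSpace T] [Nonempty T]
    {φ ψ : T → ℝ} (hφ : Continuous φ) (hψ : Continuous ψ)
    (hφ0 : ∀ t, φ t ≤ 0) (hJ : ∀ t, φ t = 0 → ψ t < 0) :
    ∃ s : ℝ, 0 < s ∧ ∀ t, φ t + s * ψ t ≤ 0 := by
  obtain ⟨t₁, -, ht₁⟩ := isCompact_univ.exists_isMaxOn Set.univ_nonempty hψ.continuousOn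
  set M : ℝ := max (ψ t₁) 1 with hM
  have hMpos : (0 : ℝ) < M := lt_of_lt_of_le one_pos (le_max_right _ _)
  have hψM : ∀ t, ψ t ≤ M := fun t => le_trans (ht₁ (Set.mem_univ t)) (le_max_left _ _)
  rcases Set.eq_empty_or_nonempty {t | 0 ≤ ψ t} with hK | hK
  · refine ⟨1, one_pos, fun t => ?_⟩
    have hψt : ψ t < 0 := by
      by_contra h
      exact (Set.eq_empty_iff_forall_notMem.mp hK t) (not_lt.mp h)
    nlinarith [hφ0 t]
  · have hKcl : IsClosed {t | 0 ≤ ψ t} := isClosed_le continuous_const hψ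
    obtain ⟨t₀, ht₀K, ht₀⟩ := hKcl.isCompact.exists_isMaxOn hK hφ.continuousOn
    have ht₀K' : 0 ≤ ψ t₀ := ht₀K
    have hη : φ t₀ < 0 := by
      rcases lt_or_eq_of_le (hφ0 t₀) with h | h
      · exact h
      · exact absurd (hJ t₀ h) (not_lt.mpr ht₀K')
    refine ⟨(-φ t₀) / M, div_pos (by linarith) hMpos, fun t => ?_⟩
    by_cases ht : 0 ≤ ψ t
    · have h1 : φ t ≤ φ t₀ := ht₀ ht
      have hs : (0 : ℝ) ≤ (-φ t₀) / M := le_of_lt (div_pos (by linarith) hMpos)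
      have h2 : (-φ t₀) / M * ψ t ≤ (-φ t₀) / M * M :=
        mul_le_mul_of_nonneg_left (hψM t) hs
      rw [div_mul_cancel₀ _ (ne_of_gt hMpos)] at h2
      linarith
    · push_neg at ht
      have hs : (0 : ℝ) ≤ (-φ t₀) / M := le_of_lt (div_pos (by linarith) hMpos)
      have : (-φ t₀) / M * ψ t ≤ 0 := mul_nonpos_of_nonneg_of_nonpos hs (le_of_lt ht)
      linarith [hφ0 t]

/-- for a semi-infinite linear system `⟨a*(t), x⟩ ≤ b*(t)` (`t ∈ T`,
`T` a nonempty compact metric space, `a*, b*` continuous) with nonempty solution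
set `S`, the Hoffman constant satisfies
`σ(a*, b*) ≥ inf { | inf_{‖h‖=1} sup_{t∈J} ⟨a*(t), h⟩ | : J ∈ 𝒥 }` where
`𝒥 := { J(x) : f(x) = 0 }`; both sides and the infimum over a possibly empty `𝒥`
are taken in `EReal` (so the empty infimum is `+∞`), and
`σ(a*, b*)` is the `EReal`-valued infimum over `x ∉ S` of `f(x)/dist(x, S)`
(`+∞` when `S = ℝⁿ`). -/
theorem stmt15 (n : ℕ) (hn : 1 ≤ n) (T : Type*) [MetricSpace T] [CompactSpace T]
    [Nonempty T] (astar : T → EuclideanSpace ℝ (Fin n)) (bstar : T → ℝ)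
    (hacont : Continuous astar) (hbcont : Continuous bstar)
    (hS : {x : EuclideanSpace ℝ (Fin n) | ∀ t, ⟪astar t, x⟫ ≤ bstar t}.Nonempty) :
    sInf {z : EReal | ∃ J : Set T,
        (∃ x : EuclideanSpace ℝ (Fin n), (⨆ t, (⟪astar t, x⟫ - bstar t)) = 0 ∧
          J = {t | ⟪astar t, x⟫ - bstar t = ⨆ s, (⟪astar s, x⟫ - bstar s)}) ∧
        z = ((|sInf {r : ℝ | ∃ h : EuclideanSpace ℝ (Fin n), ‖h‖ = 1 ∧
          r = sSup {s : ℝ | ∃ t ∈ J, s = ⟪astar t, h⟫}}| : ℝ) : EReal)} ≤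
      sInf {z : EReal | ∃ x : EuclideanSpace ℝ (Fin n),
        x ∉ {y : EuclideanSpace ℝ (Fin n) | ∀ t, ⟪astar t, y⟫ ≤ bstar t} ∧
        z = (((⨆ t, (⟪astar t, x⟫ - bstar t)) /
          Metric.infDist x {y : EuclideanSpace ℝ (Fin n) |
            ∀ t, ⟪astar t, y⟫ ≤ bstar t} : ℝ) : EReal)} := by
  set S : Set (EuclideanSpace ℝ (Fin n)) :=
    {y : EuclideanSpace ℝ (Fin n) | ∀ t, ⟪astar t, y⟫ ≤ bstar t} with hSdef
  refine le_sInf fun z hz => ?_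
  obtain ⟨x, hxS, rfl⟩ := hz
  -- basic continuity facts
  have hφcont : ∀ y : EuclideanSpace ℝ (Fin n), Continuous fun t => ⟪astar t, y⟫ - bstar t :=
    fun y => (hacont.inner (continuous_const : Continuous fun _ : T => y)).sub hbcont
  have hbdd : ∀ y : EuclideanSpace ℝ (Fin n), BddAbove (Set.range fun t => ⟪astar t, y⟫ - bstar t) := by
    intro y
    obtain ⟨t₁, -, ht₁⟩ := isCompact_univ.exists_isMaxOn Set.univ_nonempty
      (hφcont y).continuousOn
    exact ⟨_, Set.forall_mem_range.mpr fun t => ht₁ (Set.mem_univ t)⟩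
  -- S is closed, convex, nonempty
  have hScl : IsClosed S := by
    have : S = ⋂ t, {y : EuclideanSpace ℝ (Fin n) | ⟪astar t, y⟫ ≤ bstar t} := by
      ext y; simp [hSdef, Set.mem_iInter]
    rw [this]
    exact isClosed_iInter fun t =>
      isClosed_le (continuous_const.inner continuous_id) continuous_const
  have hScv : Convex ℝ S := by
    intro y₁ h₁ y₂ h₂ a b ha hb hab
    intro t
    have e1 := h₁ t
    have e2 := h₂ t
    have : ⟪astar t, a • y₁ + b • y₂⟫ = a * ⟪astar t, y₁⟫ + b * ⟪astar t, y₂⟫ := by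
      rw [inner_add_right, real_inner_smul_right, real_inner_smul_right]
    rw [this]
    calc a * ⟪astar t, y₁⟫ + b * ⟪astar t, y₂⟫
        ≤ a * bstar t + b * bstar t := by
          exact add_le_add (mul_le_mul_of_nonneg_left e1 ha)
            (mul_le_mul_of_nonneg_left e2 hb)
      _ = bstar t := by rw [← add_mul, hab, one_mul]
  -- projection onto S
  obtain ⟨p, hpS, hpnorm⟩ :=
    exists_norm_eq_iInf_of_complete_convex hS (hScl.isComplete) hScv x
  have hnormal : ∀ w ∈ S, ⟪x - p, w - p⟫ ≤ 0 :=
    (norm_eq_iInf_iff_real_inner_le_zero hScv hpS).mp hpnorm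
  have hdist : Metric.infDist x S = ‖x - p‖ := by
    rw [Metric.infDist_eq_iInf, hpnorm]
    exact iInf_congr fun w => dist_eq_norm x w
  set d : ℝ := ‖x - p‖ with hd
  have hxnep : x ≠ p := fun h => hxS (h ▸ hpS)
  have hdpos : 0 < d := by
    rw [hd, norm_pos_iff]
    exact sub_ne_zero_of_ne hxnep
  -- f(x) > 0
  set fx : ℝ := ⨆ t, (⟪astar t, x⟫ - bstar t) with hfx
  have hfxpos : 0 < fx := by
    rw [hSdef, Set.mem_setOf_eq] at hxS
    push_neg at hxS
    obtain ⟨t₀, ht₀⟩ := hxS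
    have := le_ciSup (hbdd x) t₀
    have h0 : 0 < ⟪astar t₀, x⟫ - bstar t₀ := by linarith
    linarith
  -- f(p) = 0
  have hfp0 : (⨆ t, (⟪astar t, p⟫ - bstar t)) = 0 := by
    have hle : (⨆ t, (⟪astar t, p⟫ - bstar t)) ≤ 0 :=
      ciSup_le fun t => sub_nonpos.mpr (hpS t)
    rcases lt_or_eq_of_le hle with hlt | heq
    · exfalso
      -- if f(p) < 0 we could move from p towards x staying in S
      obtain ⟨s, hspos, hs⟩ := stmt15_aux_scale (hφcont p)
        (hacont.inner (continuous_const : Continuous fun _ : T => x - p))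
        (fun t => le_trans (le_ciSup (hbdd p) t) (le_of_lt hlt))
        (fun t h => absurd h (ne_of_lt (lt_of_le_of_lt (le_ciSup (hbdd p) t) hlt)))
      have hmem : p + s • (x - p) ∈ S := by
        intro t
        have := hs t
        have hinner : ⟪astar t, p + s • (x - p)⟫
            = ⟪astar t, p⟫ + s * ⟪astar t, x - p⟫ := by
          rw [inner_add_right, real_inner_smul_right]
        rw [hinner]
        linarith
      have := hnormal _ hmem
      rw [add_sub_cancel_left, real_inner_smul_right, real_inner_self_eq_norm_sq] at this
      have hnp : (0 : ℝ) < ‖x - p‖ := hd ▸ hdpos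
      nlinarith [mul_pos hspos (pow_pos hnp 2)]
    · exact heq
  -- the active index set at p
  set Jset : Set T := {t | ⟪astar t, p⟫ - bstar t = ⨆ s, (⟪astar s, p⟫ - bstar s)}
    with hJdef
  have hmemJ : ∀ t, t ∈ Jset ↔ ⟪astar t, p⟫ - bstar t = 0 := by
    intro t; rw [hJdef, Set.mem_setOf_eq, hfp0]
  have hJne : Jset.Nonempty := by
    obtain ⟨t₁, -, ht₁⟩ := isCompact_univ.exists_isMaxOn Set.univ_nonempty
      (hφcont p).continuousOn
    refine ⟨t₁, ?_⟩
    rw [hmemJ]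
    have h1 : (⨆ t, (⟪astar t, p⟫ - bstar t)) = ⟪astar t₁, p⟫ - bstar t₁ :=
      le_antisymm (ciSup_le fun t => ht₁ (Set.mem_univ t)) (le_ciSup (hbdd p) t₁)
    rw [← h1, hfp0]
  -- key normal cone lemma
  have hkey : ∀ w : EuclideanSpace ℝ (Fin n), 0 < ⟪x - p, w⟫ → ∃ t ∈ Jset, 0 ≤ ⟪astar t, w⟫ := by
    intro w hw
    by_contra hcon
    push_neg at hcon
    obtain ⟨s, hspos, hs⟩ := stmt15_aux_scale (hφcont p)
      (hacont.inner (continuous_const : Continuous fun _ : T => w))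
      (fun t => le_trans (le_ciSup (hbdd p) t) (le_of_eq hfp0))
      (fun t h => hcon t ((hmemJ t).mpr h))
    have hmem : p + s • w ∈ S := by
      intro t
      have := hs t
      have hinner : ⟪astar t, p + s • w⟫ = ⟪astar t, p⟫ + s * ⟪astar t, w⟫ := by
        rw [inner_add_right, real_inner_smul_right]
      rw [hinner]
      linarith
    have := hnormal _ hmem
    rw [add_sub_cancel_left, real_inner_smul_right] at this
    nlinarith
  -- per-index bound on the active set
  have hJt : ∀ t ∈ Jset, ⟪astar t, x - p⟫ ≤ fx := by
    intro t ht
    rw [hmemJ] at ht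
    have h1 : ⟪astar t, x - p⟫ = (⟪astar t, x⟫ - bstar t) - (⟪astar t, p⟫ - bstar t) := by
      rw [inner_sub_right]; ring
    rw [h1, ht, sub_zero]
    exact le_ciSup (hbdd x) t
  -- the unit direction h₀ towards x
  set h₀ : EuclideanSpace ℝ (Fin n) := d⁻¹ • (x - p) with hh₀
  have hh₀norm : ‖h₀‖ = 1 := by
    rw [hh₀, norm_smul, norm_inv, Real.norm_eq_abs, abs_of_pos hdpos, ← hd,
      inv_mul_cancel₀ (ne_of_gt hdpos)]
  have hsupbdd : ∀ h : EuclideanSpace ℝ (Fin n), BddAbove {s : ℝ | ∃ t ∈ Jset, s = ⟪astar t, h⟫} := by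
    intro h
    have hc : Continuous fun t => ⟪astar t, h⟫ :=
      hacont.inner (continuous_const : Continuous fun _ : T => h)
    obtain ⟨t₁, -, ht₁⟩ := isCompact_univ.exists_isMaxOn Set.univ_nonempty hc.continuousOn
    refine ⟨⟪astar t₁, h⟫, fun r hr => ?_⟩
    obtain ⟨t, -, rfl⟩ := hr
    simpa using ht₁ (Set.mem_univ t)
  -- upper bound: g(h₀) ≤ fx / d
  have hg_up : sSup {s : ℝ | ∃ t ∈ Jset, s = ⟪astar t, h₀⟫} ≤ fx / d := by
    apply csSup_le
    · obtain ⟨t, ht⟩ := hJne; exact ⟨_, t, ht, rfl⟩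
    · rintro r ⟨t, ht, rfl⟩
      rw [hh₀, real_inner_smul_right]
      rw [div_eq_inv_mul]
      exact mul_le_mul_of_nonneg_left (hJt t ht) (le_of_lt (inv_pos.mpr hdpos))
  -- lower bound: for any unit h, g(h) ≥ -(fx/d)
  have hg_low : ∀ h : EuclideanSpace ℝ (Fin n), ‖h‖ = 1 →
      -(fx / d) ≤ sSup {s : ℝ | ∃ t ∈ Jset, s = ⟪astar t, h⟫} := by
    intro h hhn
    have hfd : 0 < fx / d := div_pos hfxpos hdpos
    have hstep : ∀ ε : ℝ, 0 < ε →
        -(fx / d) ≤ sSup {s : ℝ | ∃ t ∈ Jset, s = ⟪astar t, h⟫} + ε * (fx / d) := by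
      intro ε hε
      have hip : ⟪x - p, h₀⟫ = d := by
        rw [hh₀, real_inner_smul_right, real_inner_self_eq_norm_sq, ← hd]
        field_simp
      have hch : -d ≤ ⟪x - p, h⟫ := by
        have := abs_real_inner_le_norm (x - p) h
        rw [hhn, mul_one, ← hd] at this
        linarith [neg_abs_le ⟪x - p, h⟫]
      have hpos : 0 < ⟪x - p, h + (1 + ε) • h₀⟫ := by
        rw [inner_add_right, real_inner_smul_right, hip]
        nlinarith
      obtain ⟨t, htJ, htw⟩ := hkey _ hpos
      rw [inner_add_right, real_inner_smul_right] at htw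
      have hth₀ : ⟪astar t, h₀⟫ ≤ fx / d := by
        rw [hh₀, real_inner_smul_right, div_eq_inv_mul]
        exact mul_le_mul_of_nonneg_left (hJt t htJ) (le_of_lt (inv_pos.mpr hdpos))
      have hineq : -(1 + ε) * (fx / d) ≤ ⟪astar t, h⟫ := by nlinarith
      have hmem : ⟪astar t, h⟫ ∈ {s : ℝ | ∃ t ∈ Jset, s = ⟪astar t, h⟫} := ⟨t, htJ, rfl⟩
      have := le_csSup (hsupbdd h) hmem
      nlinarith
    by_contra hcon
    push_neg at hcon
    set g := sSup {s : ℝ | ∃ t ∈ Jset, s = ⟪astar t, h⟫}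
    have hδ : 0 < -(fx / d) - g := by linarith
    have hεpos : 0 < (-(fx / d) - g) / (2 * (fx / d)) := div_pos hδ (by linarith)
    have h2 := hstep _ hεpos
    have hne : fx / d ≠ 0 := ne_of_gt hfd
    have h3 : (-(fx / d) - g) / (2 * (fx / d)) * (fx / d) = (-(fx / d) - g) / 2 := by
      field_simp
    rw [h3] at h2
    linarith
  -- the inner infimum set
  set R : Set ℝ := {r : ℝ | ∃ h : EuclideanSpace ℝ (Fin n), ‖h‖ = 1 ∧
      r = sSup {s : ℝ | ∃ t ∈ Jset, s = ⟪astar t, h⟫}} with hRdef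
  have hRne : R.Nonempty := ⟨_, h₀, hh₀norm, rfl⟩
  have hRlow : ∀ r ∈ R, -(fx / d) ≤ r := by
    rintro r ⟨h, hhn, rfl⟩
    exact hg_low h hhn
  have hRbdd : BddBelow R := ⟨-(fx / d), hRlow⟩
  have habs : |sInf R| ≤ fx / d := by
    rw [abs_le]
    constructor
    · exact le_csInf hRne hRlow
    · exact le_trans (csInf_le hRbdd ⟨h₀, hh₀norm, rfl⟩) hg_up
  -- conclusion
  have hmemA : ((|sInf R| : ℝ) : EReal) ∈ {z : EReal | ∃ J : Set T,
      (∃ x : EuclideanSpace ℝ (Fin n), (⨆ t, (⟪astar t, x⟫ - bstar t)) = 0 ∧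
        J = {t | ⟪astar t, x⟫ - bstar t = ⨆ s, (⟪astar s, x⟫ - bstar s)}) ∧
      z = ((|sInf {r : ℝ | ∃ h : EuclideanSpace ℝ (Fin n), ‖h‖ = 1 ∧
        r = sSup {s : ℝ | ∃ t ∈ J, s = ⟪astar t, h⟫}}| : ℝ) : EReal)} :=
    ⟨Jset, ⟨p, hfp0, hJdef⟩, by rw [hRdef]⟩
  refine le_trans (sInf_le hmemA) ?_
  rw [hdist]
  exact_mod_cast habs
end

section
/- Let m, n ≥ 1 and let A be an m×n real matrix. Then there exists a constant c > 0, depending only on A, such that for every b ∈ ℝ^m for which P_{A,b} := {u ∈ ℝ^n : Au ≤ b} is nonempty and for every x ∈ ℝ^n, one has dist(x, P_{A,b}) ≤ c · ‖(Ax − b)_+‖, where (Ax − b)_+ denotes the componentwise positive part of the vector Ax − b and ‖·‖ is the Euclidean norm on ℝ^m. -/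
/-!
Let `y` be the point of `P` nearest to `x`. The variational inequality at `y` gives
`⟪x - y, d⟫ ≤ 0` for every direction `d` with `⟪aᵢ, d⟫ ≤ 0` for all constraints `i` active at `y`,
since small steps from `y` along such a `d` stay in `P`. By Farkas' lemma `x - y` is then a
nonnegative combination `∑ μᵢ aᵢ` of active normals, and by Carathéodory's theorem for cones the
`aᵢ` used can be taken linearly independent. Hence
`‖x - y‖² = ∑ μᵢ ⟪aᵢ, x - y⟫ = ∑ μᵢ (⟪aᵢ, x⟫ - bᵢ) ≤ (∑ μᵢ) ‖(Ax - b)₊‖`,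
while linear independence gives `∑ μᵢ ≤ C ‖x - y‖`, with `C` uniform over the finitely many
independent subfamilies of the rows.
-/

open scoped RealInnerProductSpace

open Finset

section Caratheodory

variable {𝕜 E : Type*} [Field 𝕜] [LinearOrder 𝕜] [IsStrictOrderedRing 𝕜]
  [AddCommGroup E] [Module 𝕜 E]

theorem Finset.exists_forall_sub_mul_nonneg_and_eq_zero {ι : Type*} {s : Finset ι}
    {f g : ι → 𝕜} (hf : ∀ i ∈ s, 0 ≤ f i) (hg : ∃ i ∈ s, 0 < g i) :
    ∃ t : 𝕜, (∀ i ∈ s, 0 ≤ f i - t * g i) ∧ ∃ i ∈ s, f i - t * g i = 0 := by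
  obtain ⟨i₀, hi₀, hmin⟩ := {i ∈ s | 0 < g i}.exists_min_image (fun i ↦ f i / g i)
    (by simpa [Finset.Nonempty] using hg)
  rw [mem_filter] at hi₀
  refine ⟨f i₀ / g i₀, fun i hi ↦ ?_, i₀, hi₀.1, by field_simp [hi₀.2.ne']; ring⟩
  rcases le_or_gt (g i) 0 with hgi | hgi
  · nlinarith [hf i hi, div_nonneg (hf i₀ hi₀.1) hi₀.2.le]
  · have := hmin i (mem_filter.2 ⟨hi, hgi⟩)
    rw [div_le_div_iff₀ hi₀.2 hgi] at this
    rw [div_mul_eq_mul_div, sub_nonneg, div_le_iff₀ hi₀.2]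
    linarith

theorem Finset.exists_sum_smul_eq_zero_and_pos_of_not_linearIndepOn {t : Finset E}
    (h : ¬ LinearIndepOn 𝕜 id (t : Set E)) :
    ∃ g : E → 𝕜, ∑ u ∈ t, g u • u = 0 ∧ ∃ u ∈ t, 0 < g u := by
  simp only [linearIndepOn_iff'', not_forall, id] at h
  obtain ⟨s, g, hst, hgs, hsum, u, hu, hgu⟩ := h
  have hsum' : ∑ u ∈ t, g u • u = 0 := by
    rw [← hsum]
    exact (sum_subset hst fun v _ hv ↦ by rw [hgs v hv, zero_smul]).symm
  rcases lt_or_gt_of_ne hgu with hneg | hpos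
  · exact ⟨-g, by simp [neg_smul, hsum'], u, hst hu, by simpa using hneg⟩
  · exact ⟨g, hsum', u, hst hu, hpos⟩

namespace PointedCone

theorem mem_hull_finset_iff {t : Finset E} {x : E} :
    x ∈ hull 𝕜 (t : Set E) ↔ ∃ f : E → 𝕜, (∀ u ∈ t, 0 ≤ f u) ∧ ∑ u ∈ t, f u • u = x := by
  refine ⟨fun hx ↦ ?_, ?_⟩
  · obtain ⟨f, -, rfl⟩ := Submodule.mem_span_finset.1 hx
    exact ⟨fun u ↦ f u, fun u _ ↦ (f u).2, rfl⟩
  · rintro ⟨f, hf, rfl⟩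
    exact Submodule.sum_mem _ fun u hu ↦ smul_mem _ (hf u hu) (subset_hull hu)

theorem exists_mem_hull_erase [DecidableEq E] {t : Finset E}
    (h : ¬ LinearIndepOn 𝕜 id (t : Set E)) {x : E} (hx : x ∈ hull 𝕜 (t : Set E)) :
    ∃ u ∈ t, x ∈ hull 𝕜 (t.erase u : Set E) := by
  obtain ⟨f, hf, rfl⟩ := mem_hull_finset_iff.1 hx
  obtain ⟨g, hg, hpos⟩ := exists_sum_smul_eq_zero_and_pos_of_not_linearIndepOn h
  obtain ⟨c, hc, u, hu, hcu⟩ := exists_forall_sub_mul_nonneg_and_eq_zero hf hpos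
  refine ⟨u, hu, mem_hull_finset_iff.2 ⟨fun v ↦ f v - c * g v,
    fun v hv ↦ hc v (mem_of_mem_erase hv), ?_⟩⟩
  rw [sum_erase _ (by simp only [hcu, zero_smul])]
  simp only [sub_smul, mul_smul, sum_sub_distrib, ← smul_sum, hg, smul_zero, sub_zero]

/-- Carathéodory's theorem for cones. -/
theorem exists_linearIndepOn_subset_mem_hull {t : Finset E} {x : E}
    (hx : x ∈ hull 𝕜 (t : Set E)) :
    ∃ s ⊆ t, LinearIndepOn 𝕜 id (s : Set E) ∧ x ∈ hull 𝕜 (s : Set E) := by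
  classical
  induction t using Finset.strongInduction with
  | H t ih =>
    by_cases h : LinearIndepOn 𝕜 id (t : Set E)
    · exact ⟨t, subset_rfl, h, hx⟩
    obtain ⟨u, hu, hxu⟩ := exists_mem_hull_erase h hx
    obtain ⟨s, hs, hli, hxs⟩ := ih _ (erase_ssubset hu) hxu
    exact ⟨s, hs.trans (erase_subset u t), hli, hxs⟩

end PointedCone

end Caratheodory

section NormedSpace

variable {E : Type*} [NormedAddCommGroup E] [NormedSpace ℝ E]

theorem LinearIndependent.exists_sum_abs_le_mul_norm {κ : Type*} [Fintype κ] {g : κ → E}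
    (hg : LinearIndependent ℝ g) :
    ∃ C, ∀ w : κ → ℝ, ∑ i, |w i| ≤ C * ‖∑ i, w i • g i‖ := by
  obtain ⟨K, -, hK⟩ := (Fintype.linearCombination ℝ g).injective_iff_antilipschitz.1
    hg.fintypeLinearCombination_injective
  refine ⟨Fintype.card κ * K, fun w ↦ ?_⟩
  calc ∑ i, |w i| = ∑ i, ‖w i‖ := rfl
    _ ≤ Fintype.card κ • ‖w‖ := Pi.sum_norm_apply_le_norm w
    _ ≤ Fintype.card κ * (K * ‖Fintype.linearCombination ℝ g w‖) := by
      rw [nsmul_eq_mul]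
      gcongr
      exact hK.le_mul_norm (map_zero _) w
    _ = Fintype.card κ * K * ‖∑ i, w i • g i‖ := by
      rw [Fintype.linearCombination_apply, mul_assoc]

theorem exists_forall_linearIndepOn_sum_abs_le_mul_norm {s : Set E} (hs : s.Finite) :
    ∃ C > 0, ∀ t : Finset E, ↑t ⊆ s → LinearIndepOn ℝ id (t : Set E) →
      ∀ w : t → ℝ, ∑ u, |w u| ≤ C * ‖∑ u, w u • (u : E)‖ := by
  have (t : Finset E) : ∃ C, LinearIndepOn ℝ id (t : Set E) →
      ∀ w : t → ℝ, ∑ u, |w u| ≤ C * ‖∑ u, w u • (u : E)‖ := by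
    by_cases ht : LinearIndepOn ℝ id (t : Set E)
    · exact (LinearIndependent.exists_sum_abs_le_mul_norm ht).imp fun _ hC _ ↦ hC
    · exact ⟨0, fun h ↦ absurd h ht⟩
  choose C hC using this
  obtain ⟨S, rfl⟩ := hs.exists_finset_coe
  obtain ⟨M, hM⟩ := (S.powerset.image C).exists_le
  refine ⟨max M 1, by positivity, fun t ht hli w ↦ (hC t hli w).trans ?_⟩
  gcongr
  exact (hM _ (mem_image_of_mem _ (mem_powerset.2 (coe_subset.1 ht)))).trans (le_max_left _ _)

namespace PointedCone

theorem isClosed_hull_of_linearIndepOn {t : Finset E} (ht : LinearIndepOn ℝ id (t : Set E)) :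
    IsClosed (hull ℝ (t : Set E) : Set E) := by
  set L := Fintype.linearCombination ℝ ((↑) : t → E)
  have hL : Topology.IsClosedEmbedding L :=
    LinearMap.isClosedEmbedding_of_injective
      (LinearMap.ker_eq_bot.2 ht.fintypeLinearCombination_injective)
  have : (hull ℝ (t : Set E) : Set E) = L '' Set.Ici 0 := by
    refine Set.Subset.antisymm (fun x hx ↦ ?_) ?_
    · obtain ⟨f, hf, rfl⟩ := mem_hull_finset_iff.1 hx
      exact ⟨fun u ↦ f u, fun u ↦ hf u u.2, sum_coe_sort t fun u ↦ f u • u⟩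
    · rintro _ ⟨w, hw, rfl⟩
      exact Submodule.sum_mem _ fun u _ ↦ smul_mem _ (hw u) (subset_hull u.2)
  rw [this]
  exact hL.isClosedMap _ isClosed_Ici

theorem isClosed_hull_finset (t : Finset E) : IsClosed (hull ℝ (t : Set E) : Set E) := by
  classical
  have : (hull ℝ (t : Set E) : Set E) =
      ⋃ (s : Finset E) (_ : s ∈ t.powerset.filter fun s : Finset E ↦
        LinearIndepOn ℝ id (s : Set E)), hull ℝ (s : Set E) := by
    refine Set.Subset.antisymm (fun x hx ↦ ?_) (Set.iUnion₂_subset fun s hs ↦ ?_)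
    · obtain ⟨s, hst, hli, hxs⟩ := exists_linearIndepOn_subset_mem_hull hx
      exact Set.mem_biUnion (mem_filter.2 ⟨mem_powerset.2 hst, hli⟩) hxs
    · exact Submodule.span_mono (coe_subset.2 (mem_powerset.1 (mem_filter.1 hs).1))
  rw [this]
  exact isClosed_biUnion_finset fun s hs ↦ isClosed_hull_of_linearIndepOn (mem_filter.1 hs).2

end PointedCone

end NormedSpace

namespace PointedCone

/-- **Farkas' lemma** for finitely generated cones. -/
theorem mem_hull_of_forall_inner_nonpos {E : Type*} [NormedAddCommGroup E] [InnerProductSpace ℝ E]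
    [CompleteSpace E] {s : Set E} (hs : s.Finite) {v : E}
    (h : ∀ d, (∀ u ∈ s, ⟪u, d⟫ ≤ 0) → ⟪v, d⟫ ≤ 0) : v ∈ hull ℝ s := by
  obtain ⟨t, rfl⟩ := hs.exists_finset_coe
  by_contra hv
  obtain ⟨y, hy, hvy⟩ :=
    ProperCone.hyperplane_separation' ⟨hull ℝ (t : Set E), isClosed_hull_finset t⟩ hv
  have := h (-y) fun u hu ↦ by simpa [inner_neg_right] using hy u (subset_hull hu)
  rw [inner_neg_right] at this
  linarith

end PointedCone

theorem le_sqrt_sum_max_zero_sq {ι : Type*} [Fintype ι] (f : ι → ℝ) (i : ι) :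
    f i ≤ √(∑ j, max (f j) 0 ^ 2) :=
  (le_max_left _ _).trans <| (le_abs_self _).trans <| Real.abs_le_sqrt <|
    single_le_sum (fun j _ ↦ sq_nonneg (max (f j) 0)) (mem_univ i)

section Polyhedron

variable {ι E : Type*} [NormedAddCommGroup E] [InnerProductSpace ℝ E]

def polyhedron (a : ι → E) (b : ι → ℝ) : Set E := {u | ∀ i, ⟪a i, u⟫ ≤ b i}

variable {a : ι → E} {b : ι → ℝ}

theorem isClosed_polyhedron (a : ι → E) (b : ι → ℝ) : IsClosed (polyhedron a b) := by
  simp only [polyhedron, Set.ofPred_forall]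
  exact isClosed_iInter fun i ↦ isClosed_le (continuous_const.inner continuous_id) continuous_const

theorem convex_polyhedron (a : ι → E) (b : ι → ℝ) : Convex ℝ (polyhedron a b) := by
  simp only [polyhedron, Set.ofPred_forall]
  exact convex_iInter fun i ↦ convex_halfSpace_le (innerₛₗ ℝ (a i)).isLinear _

open Filter Topology in
theorem eventually_add_smul_mem_polyhedron [Finite ι] {y d : E} (hy : y ∈ polyhedron a b)
    (hd : ∀ i, ⟪a i, y⟫ = b i → ⟪a i, d⟫ ≤ 0) :
    ∀ᶠ t in 𝓝[>] (0 : ℝ), y + t • d ∈ polyhedron a b := by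
  simp only [polyhedron, Set.mem_ofPred_eq, inner_add_right, real_inner_smul_right,
    eventually_all]
  intro i
  rcases (hy i).eq_or_lt with hi | hi
  · filter_upwards [self_mem_nhdsWithin] with t (ht : 0 < t)
    nlinarith [hd i hi]
  · refine nhdsWithin_le_nhds (Tendsto.eventually_le_const hi ?_)
    exact (continuous_const.add (continuous_id.mul continuous_const)).tendsto' 0 _ (by simp)

theorem sub_mem_hull_of_forall_inner_sub_nonpos [Finite ι] [CompleteSpace E] {x y : E}
    (hy : y ∈ polyhedron a b) (hxy : ∀ w ∈ polyhedron a b, ⟪x - y, w - y⟫ ≤ 0) :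
    x - y ∈ PointedCone.hull ℝ (a '' {i | ⟪a i, y⟫ = b i}) := by
  refine PointedCone.mem_hull_of_forall_inner_nonpos (Set.toFinite _) fun d hd ↦ ?_
  obtain ⟨t, hmem, ht⟩ := ((eventually_add_smul_mem_polyhedron hy
    fun i hi ↦ hd _ ⟨i, hi, rfl⟩).and self_mem_nhdsWithin).exists
  have := hxy _ hmem
  rw [add_sub_cancel_left, real_inner_smul_right] at this
  nlinarith [show (0 : ℝ) < t from ht]

theorem norm_sub_le_of_sub_mem_hull [Fintype ι] {C : ℝ} (hC : 0 ≤ C)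
    (hCa : ∀ t : Finset E, ↑t ⊆ Set.range a → LinearIndepOn ℝ id (t : Set E) →
      ∀ w : t → ℝ, ∑ u, |w u| ≤ C * ‖∑ u, w u • (u : E)‖)
    {x y : E} (hxy : x - y ∈ PointedCone.hull ℝ (a '' {i | ⟪a i, y⟫ = b i})) :
    ‖x - y‖ ≤ C * √(∑ i, max (⟪a i, x⟫ - b i) 0 ^ 2) := by
  set e := √(∑ i, max (⟪a i, x⟫ - b i) 0 ^ 2)
  obtain ⟨t, ht⟩ := (Set.toFinite (a '' {i | ⟪a i, y⟫ = b i})).exists_finset_coe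
  rw [← ht] at hxy
  obtain ⟨s, hst, hli, hs⟩ := PointedCone.exists_linearIndepOn_subset_mem_hull hxy
  obtain ⟨f, hf, hsum⟩ := PointedCone.mem_hull_finset_iff.1 hs
  have hsa : ∀ u ∈ s, ⟪u, x - y⟫ ≤ e := by
    intro u hu
    obtain ⟨i, hi, rfl⟩ : u ∈ a '' {i | ⟪a i, y⟫ = b i} := ht ▸ hst hu
    rw [inner_sub_right, hi]
    exact le_sqrt_sum_max_zero_sq (fun j ↦ ⟪a j, x⟫ - b j) i
  have hf_le : ∑ u ∈ s, f u ≤ C * ‖x - y‖ := by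
    have := hCa s (fun u hu ↦ ?_) hli fun u ↦ f u
    · rwa [sum_coe_sort s fun u ↦ |f u|, sum_coe_sort s fun u ↦ f u • u, hsum,
        sum_congr rfl fun u hu ↦ abs_of_nonneg (hf u hu)] at this
    obtain ⟨i, -, rfl⟩ : u ∈ a '' {i | ⟪a i, y⟫ = b i} := ht ▸ hst hu
    exact Set.mem_range_self i
  have : ‖x - y‖ ^ 2 ≤ C * ‖x - y‖ * e :=
    calc ‖x - y‖ ^ 2 = ∑ u ∈ s, f u * ⟪u, x - y⟫ := by
          rw [← real_inner_self_eq_norm_sq]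
          nth_rw 1 [← hsum]
          simp only [sum_inner, real_inner_smul_left]
      _ ≤ ∑ u ∈ s, f u * e := sum_le_sum fun u hu ↦ mul_le_mul_of_nonneg_left (hsa u hu) (hf u hu)
      _ = (∑ u ∈ s, f u) * e := by rw [sum_mul]
      _ ≤ C * ‖x - y‖ * e := mul_le_mul_of_nonneg_right hf_le (Real.sqrt_nonneg _)
  have he : 0 ≤ e := Real.sqrt_nonneg _
  nlinarith [mul_nonneg hC he]

end Polyhedron

theorem stmt16_general (m n : ℕ)
    (a : Fin m → EuclideanSpace ℝ (Fin n)) :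
    ∃ c : ℝ, 0 < c ∧ ∀ b : Fin m → ℝ,
      {u : EuclideanSpace ℝ (Fin n) | ∀ i, ⟪a i, u⟫ ≤ b i}.Nonempty →
      ∀ x : EuclideanSpace ℝ (Fin n),
        Metric.infDist x {u : EuclideanSpace ℝ (Fin n) | ∀ i, ⟪a i, u⟫ ≤ b i} ≤
          c * Real.sqrt (∑ i, max (⟪a i, x⟫ - b i) 0 ^ 2) := by
  obtain ⟨c, hc, hca⟩ := exists_forall_linearIndepOn_sum_abs_le_mul_norm (Set.finite_range a)
  refine ⟨c, hc, fun b hP x ↦ ?_⟩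
  obtain ⟨y, hy, hxy⟩ := exists_norm_eq_iInf_of_complete_convex hP
    (isClosed_polyhedron a b).isComplete (convex_polyhedron a b) x
  have hvar := (norm_eq_iInf_iff_real_inner_le_zero (convex_polyhedron a b) hy).1 hxy
  calc Metric.infDist x (polyhedron a b) ≤ dist x y := Metric.infDist_le_dist_of_mem hy
    _ = ‖x - y‖ := dist_eq_norm x y
    _ ≤ c * √(∑ i, max (⟪a i, x⟫ - b i) 0 ^ 2) :=
      norm_sub_le_of_sub_mem_hull hc.le hca (sub_mem_hull_of_forall_inner_sub_nonpos hy hvar)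

/-- Hoffman, 1952: for an `m × n` real matrix `A` with rows
`a₁, …, a_m`, there is a constant `c > 0`, depending only on `A`, such that for
every `b ∈ ℝᵐ` with `P_{A,b} = {u : Au ≤ b}` nonempty and every `x ∈ ℝⁿ`,
`dist(x, P_{A,b}) ≤ c · ‖(Ax - b)₊‖`, where `(Ax - b)₊` is the componentwise
positive part and `‖·‖` the Euclidean norm on `ℝᵐ`. -/
theorem stmt16 (m n : ℕ) (hm : 1 ≤ m) (hn : 1 ≤ n)
    (a : Fin m → EuclideanSpace ℝ (Fin n)) :
    ∃ c : ℝ, 0 < c ∧ ∀ b : Fin m → ℝ,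
      {u : EuclideanSpace ℝ (Fin n) | ∀ i, ⟪a i, u⟫ ≤ b i}.Nonempty →
      ∀ x : EuclideanSpace ℝ (Fin n),
        Metric.infDist x {u : EuclideanSpace ℝ (Fin n) | ∀ i, ⟪a i, u⟫ ≤ b i} ≤
          c * Real.sqrt (∑ i, max (⟪a i, x⟫ - b i) 0 ^ 2) :=
  stmt16_general m n a
end
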